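/- arXiv:1707.02323 — 9 statements merged into one kernel-verified Lean document; each statement's English description precedes it below -/
import Mathlib

section
/- Let q ≥ 1 and for 1 ≤ l ≤ q let k_l ≥ 1 be strictly increasing integers, m_l ≥ 0 integers, a_l nonzero complex numbers, and let m_0 be a nonnegative integer with a_0 ≠ 0. Assume m_0 > m_{l_1} for some l_1 ∈ {1,…,q}. Then there exists μ_P > 0 depending only on the m_l, k_l and m_0, such that for all sufficiently small |ε| > 0, the polynomial t ↦ Σ_{l=1}^q a_l ε^{m_l} t^{k_l} + a_0 ε^{m_0} has at least one root in the open disc of radius |ε|^{μ_P} centered at 0. -/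
/-- Existence of a moving turning point: the polynomial
`t ↦ Σ_{l=1}^q a_l ε^{m_l} t^{k_l} + a_0 ε^{m_0}` has a root in the disc of radius
`|ε|^{μ_P}` for all small `ε ≠ 0`, where `μ_P` depends only on the `m_l`, `k_l` and `m_0`. -/
theorem stmt_0 (q : ℕ) (hq : 1 ≤ q) (k m : ℕ → ℕ)
    (hk1 : ∀ l, 1 ≤ l → l ≤ q → 1 ≤ k l)
    (hkmono : ∀ l l', 1 ≤ l → l < l' → l' ≤ q → k l < k l')
    (l1 : ℕ) (hl1 : 1 ≤ l1) (hl1q : l1 ≤ q) (hm : m l1 < m 0) :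
    ∃ μP : ℝ, 0 < μP ∧
      ∀ a : ℕ → ℂ, (∀ l, l ≤ q → a l ≠ 0) →
        ∃ ε0 : ℝ, 0 < ε0 ∧ ∀ ε : ℂ, ε ≠ 0 → ‖ε‖ < ε0 →
          ∃ t : ℂ, ‖t‖ < ‖ε‖ ^ μP ∧
            (∑ l ∈ Finset.Icc 1 q, a l * ε ^ m l * t ^ k l) + a 0 * ε ^ m 0 = 0 := by
  classical
  -- choose `j` minimizing `(m l, l)` lexicographically over `l ∈ [1, q]`
  have hl1mem : l1 ∈ Finset.Icc 1 q := Finset.mem_Icc.mpr ⟨hl1, hl1q⟩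
  obtain ⟨j, hjmem, hjmin⟩ := Finset.exists_min_image (Finset.Icc 1 q)
    (fun l => m l * (q + 1) + l) ⟨l1, hl1mem⟩
  obtain ⟨hj1, hjq⟩ := Finset.mem_Icc.mp hjmem
  have hkj : 1 ≤ k j := hk1 j hj1 hjq
  have hlex : ∀ l ∈ Finset.Icc 1 q, m j < m l ∨ (m j = m l ∧ j ≤ l) := by
    intro l hl
    have h := hjmin l hl
    have hlq : l ≤ q := (Finset.mem_Icc.mp hl).2
    rcases lt_trichotomy (m j) (m l) with hlt | he | hgt
    · exact Or.inl hlt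
    · refine Or.inr ⟨he, ?_⟩
      rw [he] at h
      omega
    · exfalso
      have h2 : (m l + 1) * (q + 1) ≤ m j * (q + 1) :=
        Nat.mul_le_mul_right _ hgt
      have h3 : m l * (q + 1) + (q + 1) ≤ m j * (q + 1) := by
        calc m l * (q + 1) + (q + 1) = (m l + 1) * (q + 1) := by ring
        _ ≤ m j * (q + 1) := h2
      linarith
  have hmj0 : m j < m 0 := by
    rcases hlex l1 hl1mem with h | ⟨h, _⟩ <;> omega
  -- the exponent
  have hkjR : (0 : ℝ) < (k j : ℝ) := by exact_mod_cast hkj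
  set ν : ℝ := 1 / (2 * (k j : ℝ)) with hνdef
  have hν0 : 0 < ν := by rw [hνdef]; positivity
  have hkjR1 : (1 : ℝ) ≤ (k j : ℝ) := by exact_mod_cast hkj
  have hνkj : ν * (k j : ℝ) = 1 / 2 := by
    rw [hνdef]; field_simp
  have hνhalf : ν ≤ 1 / 2 := by
    rw [hνdef]
    rw [div_le_div_iff₀ (by positivity) (by norm_num)]
    nlinarith [hkjR1]
  -- key exponent inequalities
  have hσν : ∀ l ∈ Finset.Icc 1 q, l ≠ j →
      (m j : ℝ) + ν * (k j : ℝ) + ν ≤ (m l : ℝ) + ν * (k l : ℝ) := by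
    intro l hl hlj
    obtain ⟨hl1', hlq⟩ := Finset.mem_Icc.mp hl
    have hkl : 1 ≤ k l := hk1 l hl1' hlq
    have hklR : (1 : ℝ) ≤ (k l : ℝ) := by exact_mod_cast hkl
    rcases hlex l hl with hlt | ⟨he, hjl⟩
    · have h1 : (m j : ℝ) + 1 ≤ (m l : ℝ) := by exact_mod_cast hlt
      have h2 : ν ≤ ν * (k l : ℝ) := by nlinarith
      linarith [hνkj, hνhalf]
    · have hjl' : j < l := lt_of_le_of_ne hjl (Ne.symm hlj)
      have hkk : k j < k l := hkmono j l hj1 hjl' hlq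
      have hkkR : (k j : ℝ) + 1 ≤ (k l : ℝ) := by exact_mod_cast hkk
      have heR : (m j : ℝ) = (m l : ℝ) := by exact_mod_cast he
      nlinarith
  have hσ0 : (m j : ℝ) + ν * (k j : ℝ) + ν ≤ (m 0 : ℝ) := by
    have h1 : (m j : ℝ) + 1 ≤ (m 0 : ℝ) := by exact_mod_cast hmj0
    linarith [hνkj, hνhalf]
  refine ⟨ν / 2, by positivity, ?_⟩
  intro a ha
  have ha0 : a 0 ≠ 0 := ha 0 (Nat.zero_le q)
  have haj : a j ≠ 0 := ha j hjq
  have hajn : 0 < ‖a j‖ := norm_pos_iff.mpr haj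
  have ha0n : 0 < ‖a 0‖ := norm_pos_iff.mpr ha0
  set S : ℝ := ∑ l ∈ Finset.Icc 1 q, ‖a l‖ with hSdef
  have hS0 : 0 ≤ S := Finset.sum_nonneg fun _ _ => norm_nonneg _
  set D : ℝ := S + 3 * ‖a 0‖ + 1 with hDdef
  have hD0 : 0 < D := by rw [hDdef]; linarith [hS0, ha0n]
  refine ⟨min 1 ((‖a j‖ / D) ^ (1 / ν : ℝ)), lt_min one_pos
    (Real.rpow_pos_of_pos (div_pos hajn hD0) _), ?_⟩
  intro ε hε hεlt
  set e : ℝ := ‖ε‖ with hedef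
  have he0 : 0 < e := norm_pos_iff.mpr hε
  have he1 : e < 1 := lt_of_lt_of_le hεlt (min_le_left _ _)
  -- the crucial smallness of `e ^ ν`
  have heD : D * e ^ (ν : ℝ) < ‖a j‖ := by
    have h1 : e < (‖a j‖ / D) ^ (1 / ν : ℝ) := lt_of_lt_of_le hεlt (min_le_right _ _)
    have h2 : e ^ (ν : ℝ) < ((‖a j‖ / D) ^ (1 / ν : ℝ)) ^ (ν : ℝ) :=
      Real.rpow_lt_rpow he0.le h1 hν0
    rw [← Real.rpow_mul (le_of_lt (div_pos hajn hD0)), one_div_mul_cancel hν0.ne',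
      Real.rpow_one] at h2
    rw [lt_div_iff₀ hD0] at h2
    linarith [h2]
  set R : ℝ := e ^ (ν : ℝ) with hRdef
  have hR0 : 0 < R := Real.rpow_pos_of_pos he0 _
  set σ : ℝ := (m j : ℝ) + ν * (k j : ℝ) with hσdef
  set c : ℝ := ‖a 0‖ * e ^ ((m 0 : ℕ) : ℝ) with hcdef
  have hcpos : 0 < c := by
    rw [hcdef]; positivity
  have hc : ‖a 0 * ε ^ m 0‖ = c := by
    rw [hcdef, norm_mul, norm_pow, ← Real.rpow_natCast e (m 0)]
  -- norm of each monomial term on the circle of radius R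
  have hterm : ∀ (t : ℂ), ‖t‖ = R → ∀ l : ℕ,
      ‖a l * ε ^ m l * t ^ k l‖ = ‖a l‖ * e ^ ((m l : ℝ) + ν * (k l : ℝ)) := by
    intro t ht l
    rw [norm_mul, norm_mul, norm_pow, norm_pow, ht, hRdef,
      ← Real.rpow_natCast e (m l), ← Real.rpow_natCast (e ^ (ν : ℝ)) (k l),
      ← Real.rpow_mul he0.le, Real.rpow_add he0, mul_assoc]
  set f : ℂ → ℂ := fun t =>
    (∑ l ∈ Finset.Icc 1 q, a l * ε ^ m l * t ^ k l) + a 0 * ε ^ m 0 with hfdef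
  -- main lower bound on the circle
  have hmain : ∀ t : ℂ, ‖t‖ = R → 2 * c ≤ ‖f t‖ := by
    intro t ht
    have hsplit : (∑ l ∈ Finset.Icc 1 q, a l * ε ^ m l * t ^ k l)
        = a j * ε ^ m j * t ^ k j
          + ∑ l ∈ (Finset.Icc 1 q).erase j, a l * ε ^ m l * t ^ k l :=
      (Finset.add_sum_erase _ _ hjmem).symm
    have hfj : a j * ε ^ m j * t ^ k j
        = f t - ((∑ l ∈ (Finset.Icc 1 q).erase j, a l * ε ^ m l * t ^ k l)
          + a 0 * ε ^ m 0) := by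
      rw [hfdef]; simp only []; rw [hsplit]; ring
    have h1 : ‖a j * ε ^ m j * t ^ k j‖ ≤ ‖f t‖
        + (∑ l ∈ (Finset.Icc 1 q).erase j, ‖a l * ε ^ m l * t ^ k l‖
          + ‖a 0 * ε ^ m 0‖) := by
      rw [hfj]
      refine (norm_sub_le _ _).trans ?_
      gcongr
      refine (norm_add_le _ _).trans ?_
      gcongr
      exact norm_sum_le _ _
    -- bound the erased sum
    have h2 : ∑ l ∈ (Finset.Icc 1 q).erase j, ‖a l * ε ^ m l * t ^ k l‖
        ≤ S * (e ^ (σ : ℝ) * e ^ (ν : ℝ)) := by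
      rw [← Real.rpow_add he0]
      calc ∑ l ∈ (Finset.Icc 1 q).erase j, ‖a l * ε ^ m l * t ^ k l‖
          ≤ ∑ l ∈ (Finset.Icc 1 q).erase j, ‖a l‖ * e ^ (σ + ν : ℝ) := by
            refine Finset.sum_le_sum ?_
            intro l hl
            obtain ⟨hlj, hlmem⟩ := Finset.mem_erase.mp hl
            rw [hterm t ht l]
            have := hσν l hlmem hlj
            have hle : e ^ ((m l : ℝ) + ν * (k l : ℝ)) ≤ e ^ (σ + ν : ℝ) :=
              Real.rpow_le_rpow_of_exponent_ge he0 he1.le (by rw [hσdef]; linarith)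
            exact mul_le_mul_of_nonneg_left hle (norm_nonneg _)
        _ = (∑ l ∈ (Finset.Icc 1 q).erase j, ‖a l‖) * e ^ (σ + ν : ℝ) := by
            rw [Finset.sum_mul]
        _ ≤ S * e ^ (σ + ν : ℝ) := by
            refine mul_le_mul_of_nonneg_right ?_ (Real.rpow_pos_of_pos he0 _).le
            exact Finset.sum_le_sum_of_subset_of_nonneg (Finset.erase_subset _ _)
              (fun _ _ _ => norm_nonneg _)
    have h3 : c ≤ ‖a 0‖ * (e ^ (σ : ℝ) * e ^ (ν : ℝ)) := by
      rw [← Real.rpow_add he0, hcdef]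
      refine mul_le_mul_of_nonneg_left ?_ (norm_nonneg _)
      exact Real.rpow_le_rpow_of_exponent_ge he0 he1.le (by rw [hσdef]; linarith [hσ0])
    have h4 : ‖a j * ε ^ m j * t ^ k j‖ = ‖a j‖ * e ^ (σ : ℝ) := by
      rw [hterm t ht j, hσdef]
    -- combine using heD
    have heσ : 0 < e ^ (σ : ℝ) := Real.rpow_pos_of_pos he0 _
    have heν : 0 < e ^ (ν : ℝ) := Real.rpow_pos_of_pos he0 _
    have hkey : D * e ^ (ν : ℝ) * e ^ (σ : ℝ) < ‖a j‖ * e ^ (σ : ℝ) :=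
      mul_lt_mul_of_pos_right heD heσ
    rw [hDdef] at hkey
    have hX : 0 ≤ e ^ (σ : ℝ) * e ^ (ν : ℝ) := mul_nonneg heσ.le heν.le
    linarith [h1, h2, h3, h4, hc, hkey, hX, hS0]
  -- conclude by the minimum modulus principle
  by_contra hcon
  push_neg at hcon
  have hRlt : R < e ^ (ν / 2 : ℝ) :=
    Real.rpow_lt_rpow_of_exponent_gt he0 he1 (by linarith)
  have hfne : ∀ t ∈ Metric.closedBall (0 : ℂ) R, f t ≠ 0 := by
    intro t htmem
    have h : ‖t‖ ≤ R := by rwa [Metric.mem_closedBall, dist_zero_right] at htmem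
    exact hcon t (lt_of_le_of_lt h hRlt)
  have hfdiff : Differentiable ℂ f := by
    refine Differentiable.add ?_ (differentiable_const _)
    exact Differentiable.fun_sum fun l _ => (differentiable_pow (k l)).const_mul _
  have hg : DiffContOnCl ℂ (fun t => (f t)⁻¹) (Metric.ball (0 : ℂ) R) := by
    apply DifferentiableOn.diffContOnCl
    rw [closure_ball (0 : ℂ) hR0.ne']
    exact hfdiff.differentiableOn.inv hfne
  have hb : ∀ z ∈ frontier (Metric.ball (0 : ℂ) R), ‖(f z)⁻¹‖ ≤ (2 * c)⁻¹ := by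
    intro z hz
    rw [frontier_ball (0 : ℂ) hR0.ne'] at hz
    have hz' : ‖z‖ = R := by rwa [mem_sphere_zero_iff_norm] at hz
    rw [norm_inv]
    exact inv_anti₀ (by linarith) (hmain z hz')
  have h0 : ‖(f 0)⁻¹‖ ≤ (2 * c)⁻¹ :=
    Complex.norm_le_of_forall_mem_frontier_norm_le Metric.isBounded_ball hg hb
      (subset_closure (Metric.mem_ball_self hR0))
  have hf0 : f 0 = a 0 * ε ^ m 0 := by
    rw [hfdef]
    simp only []
    rw [Finset.sum_eq_zero, zero_add]
    intro l hl
    obtain ⟨hl1', hlq⟩ := Finset.mem_Icc.mp hl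
    rw [zero_pow (by have := hk1 l hl1' hlq; omega), mul_zero]
  rw [hf0, norm_inv, hc] at h0
  rw [inv_le_inv₀ hcpos (by linarith)] at h0
  linarith
end

section
/- Let j_1 ∈ {1,…,q} with m_{j_1} = min_{1≤l≤q} m_l and suppose m_0 > m_{j_1}. Choose μ > 0 such that m_0 − m_{j_1} − k_{j_1} μ > 0 and m_l − m_{j_1} + μ(k_l − k_{j_1}) > 0 for all l ≠ j_1. Then with P_1(t,ε) = Σ_{l=1}^q a_l ε^{m_l − m_{j_1}} t^{k_l} + a_0 ε^{m_0 − m_{j_1}} and P_0(t) = a_{j_1} t^{k_{j_1}}, the quantity sup_{|t| = |ε|^μ} |P_1(t,ε) − P_0(t)|/|P_0(t)| tends to 0 as ε → 0; in particular |P_1(t,ε) − P_0(t)| < |P_0(t)| on the circle |t| = |ε|^μ for all |ε| small enough. -/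
/-- The key Rouché-type estimate: with `P₁(t,ε) = Σ_{l=1}^q a_l ε^{m_l-m_{j₁}} t^{k_l}
+ a_0 ε^{m_0-m_{j₁}}` and `P₀(t) = a_{j₁} t^{k_{j₁}}`, the supremum over the circle
`|t| = |ε|^μ` of `|P₁ - P₀|/|P₀|` tends to `0` as `ε → 0`; in particular
`|P₁ - P₀| < |P₀|` on that circle for `|ε|` small enough. -/
theorem stmt_1 (q : ℕ) (hq : 1 ≤ q) (k m : ℕ → ℕ) (a : ℕ → ℂ)
    (hk1 : ∀ l, 1 ≤ l → l ≤ q → 1 ≤ k l)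
    (hkmono : ∀ l l', 1 ≤ l → l < l' → l' ≤ q → k l < k l')
    (ha : ∀ l, l ≤ q → a l ≠ 0)
    (j1 : ℕ) (hj1 : 1 ≤ j1) (hj1q : j1 ≤ q)
    (hmin : ∀ l, 1 ≤ l → l ≤ q → m j1 ≤ m l)
    (hm0 : m j1 < m 0)
    (μ : ℝ) (hμpos : 0 < μ)
    (hμ1 : 0 < (m 0 : ℝ) - m j1 - (k j1 : ℝ) * μ)
    (hμ2 : ∀ l, 1 ≤ l → l ≤ q → l ≠ j1 →
      0 < (m l : ℝ) - m j1 + μ * ((k l : ℝ) - (k j1 : ℝ))) :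
    (∀ δ : ℝ, 0 < δ → ∃ ε0 : ℝ, 0 < ε0 ∧ ∀ ε : ℂ, ε ≠ 0 → ‖ε‖ < ε0 →
      ∀ t : ℂ, ‖t‖ = ‖ε‖ ^ μ →
        ‖((∑ l ∈ Finset.Icc 1 q, a l * ε ^ (m l - m j1) * t ^ k l)
            + a 0 * ε ^ (m 0 - m j1)) - a j1 * t ^ k j1‖
          ≤ δ * ‖a j1 * t ^ k j1‖) ∧
    (∃ ε0 : ℝ, 0 < ε0 ∧ ∀ ε : ℂ, ε ≠ 0 → ‖ε‖ < ε0 →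
      ∀ t : ℂ, ‖t‖ = ‖ε‖ ^ μ →
        ‖((∑ l ∈ Finset.Icc 1 q, a l * ε ^ (m l - m j1) * t ^ k l)
            + a 0 * ε ^ (m 0 - m j1)) - a j1 * t ^ k j1‖
          < ‖a j1 * t ^ k j1‖) := by
  classical
  have haj1 : a j1 ≠ 0 := ha j1 hj1q
  have haj1n : (0:ℝ) < ‖a j1‖ := norm_pos_iff.mpr haj1
  set S : Finset ℕ := Finset.Icc 1 q \ {j1} with hS
  have h0S : 0 ∉ S := by
    simp [hS]
  set p : ℕ → ℝ := fun l =>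
    if l = 0 then (m 0 : ℝ) - m j1 - (k j1 : ℝ) * μ
    else (m l : ℝ) - m j1 + μ * ((k l : ℝ) - (k j1 : ℝ)) with hp
  have hppos : ∀ l ∈ insert 0 S, 0 < p l := by
    intro l hl
    rcases Finset.mem_insert.mp hl with rfl | hl
    · simpa [hp] using hμ1
    · simp only [hS, Finset.mem_sdiff, Finset.mem_Icc, Finset.mem_singleton] at hl
      have hl0 : l ≠ 0 := by omega
      simpa [hp, hl0] using hμ2 l hl.1.1 hl.1.2 hl.2
  set G : ℝ → ℝ := fun r => ∑ l ∈ insert 0 S, (‖a l‖ / ‖a j1‖) * r ^ (p l) with hG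
  have hG0 : G 0 = 0 := by
    refine Finset.sum_eq_zero fun l hl => ?_
    rw [Real.zero_rpow (ne_of_gt (hppos l hl))]; ring
  have hGcont : Continuous G := by
    refine continuous_finset_sum _ fun l hl => ?_
    exact continuous_const.mul (Real.continuous_rpow_const (le_of_lt (hppos l hl)))
  -- main pointwise estimate
  have main : ∀ ε : ℂ, ε ≠ 0 → ∀ t : ℂ, ‖t‖ = ‖ε‖ ^ μ →
      ‖((∑ l ∈ Finset.Icc 1 q, a l * ε ^ (m l - m j1) * t ^ k l)
            + a 0 * ε ^ (m 0 - m j1)) - a j1 * t ^ k j1‖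
        ≤ G ‖ε‖ * ‖a j1 * t ^ k j1‖ := by
    intro ε hε t ht
    have hr : (0:ℝ) < ‖ε‖ := norm_pos_iff.mpr hε
    set r : ℝ := ‖ε‖ with hrdef
    have hj1mem : j1 ∈ Finset.Icc 1 q := Finset.mem_Icc.mpr ⟨hj1, hj1q⟩
    have hsplit : ((∑ l ∈ Finset.Icc 1 q, a l * ε ^ (m l - m j1) * t ^ k l)
            + a 0 * ε ^ (m 0 - m j1)) - a j1 * t ^ k j1
        = (∑ l ∈ S, a l * ε ^ (m l - m j1) * t ^ k l) + a 0 * ε ^ (m 0 - m j1) := by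
      rw [← Finset.sum_sdiff (Finset.singleton_subset_iff.mpr hj1mem)]
      simp [hS]
      ring
    rw [hsplit]
    -- denominator
    have hdenom : ‖a j1 * t ^ k j1‖ = ‖a j1‖ * r ^ (μ * (k j1 : ℝ)) := by
      rw [norm_mul, norm_pow, ht, Real.rpow_mul hr.le, Real.rpow_natCast]
    have hterm : ∀ l ∈ S, ‖a l * ε ^ (m l - m j1) * t ^ k l‖
        = (‖a l‖ / ‖a j1‖) * r ^ (p l) * ‖a j1 * t ^ k j1‖ := by
      intro l hl
      simp only [hS, Finset.mem_sdiff, Finset.mem_Icc, Finset.mem_singleton] at hl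
      have hl0 : l ≠ 0 := by omega
      have hcast : ((m l - m j1 : ℕ) : ℝ) = (m l : ℝ) - m j1 := by
        rw [Nat.cast_sub (hmin l hl.1.1 hl.1.2)]
      have hexp : r ^ (p l) * r ^ (μ * (k j1:ℝ)) = r ^ ((m l:ℝ) - m j1) * r ^ (μ * (k l:ℝ)) := by
        rw [← Real.rpow_add hr, ← Real.rpow_add hr]
        congr 1
        simp only [hp, hl0, if_false]
        ring
      rw [hdenom, norm_mul, norm_mul, norm_pow, norm_pow, ht,
        ← Real.rpow_natCast r (m l - m j1), ← Real.rpow_natCast (r ^ μ) (k l),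
        ← Real.rpow_mul hr.le, hcast,
        show (‖a l‖ / ‖a j1‖) * r ^ (p l) * (‖a j1‖ * r ^ (μ * (k j1:ℝ)))
          = ‖a l‖ * (r ^ (p l) * r ^ (μ * (k j1:ℝ))) from by
            rw [div_mul_eq_mul_div, div_mul_eq_mul_div, div_eq_iff haj1n.ne']; ring,
        hexp]
      ring
    have hterm0 : ‖a 0 * ε ^ (m 0 - m j1)‖
        = (‖a 0‖ / ‖a j1‖) * r ^ (p 0) * ‖a j1 * t ^ k j1‖ := by
      have hcast : ((m 0 - m j1 : ℕ) : ℝ) = (m 0 : ℝ) - m j1 := by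
        rw [Nat.cast_sub hm0.le]
      have hexp : r ^ (p 0) * r ^ (μ * (k j1:ℝ)) = r ^ ((m 0:ℝ) - m j1) := by
        rw [← Real.rpow_add hr]
        congr 1
        simp only [hp, if_true]
        ring
      rw [hdenom, norm_mul, norm_pow, ← Real.rpow_natCast r (m 0 - m j1), hcast,
        show (‖a 0‖ / ‖a j1‖) * r ^ (p 0) * (‖a j1‖ * r ^ (μ * (k j1:ℝ)))
          = ‖a 0‖ * (r ^ (p 0) * r ^ (μ * (k j1:ℝ))) from by
            rw [div_mul_eq_mul_div, div_mul_eq_mul_div, div_eq_iff haj1n.ne']; ring,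
        hexp]
    calc ‖(∑ l ∈ S, a l * ε ^ (m l - m j1) * t ^ k l) + a 0 * ε ^ (m 0 - m j1)‖
        ≤ ‖∑ l ∈ S, a l * ε ^ (m l - m j1) * t ^ k l‖ + ‖a 0 * ε ^ (m 0 - m j1)‖ :=
          norm_add_le _ _
      _ ≤ (∑ l ∈ S, ‖a l * ε ^ (m l - m j1) * t ^ k l‖) + ‖a 0 * ε ^ (m 0 - m j1)‖ := by
          gcongr
          exact norm_sum_le _ _
      _ = (∑ l ∈ S, (‖a l‖ / ‖a j1‖) * r ^ (p l) * ‖a j1 * t ^ k j1‖)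
            + (‖a 0‖ / ‖a j1‖) * r ^ (p 0) * ‖a j1 * t ^ k j1‖ := by
          rw [hterm0, Finset.sum_congr rfl hterm]
      _ = G r * ‖a j1 * t ^ k j1‖ := by
          simp only [hG]
          rw [Finset.sum_insert h0S, add_mul, Finset.sum_mul]
          ring
  -- part 1
  have part1 : ∀ δ : ℝ, 0 < δ → ∃ ε0 : ℝ, 0 < ε0 ∧ ∀ ε : ℂ, ε ≠ 0 → ‖ε‖ < ε0 →
      ∀ t : ℂ, ‖t‖ = ‖ε‖ ^ μ →
        ‖((∑ l ∈ Finset.Icc 1 q, a l * ε ^ (m l - m j1) * t ^ k l)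
            + a 0 * ε ^ (m 0 - m j1)) - a j1 * t ^ k j1‖
          ≤ δ * ‖a j1 * t ^ k j1‖ := by
    intro δ hδ
    have htend : Filter.Tendsto G (nhds 0) (nhds 0) := by
      have := hGcont.continuousAt (x := 0)
      rwa [ContinuousAt, hG0] at this
    have hev : ∀ᶠ r in nhds (0:ℝ), G r < δ := htend.eventually_lt_const hδ
    rcases Metric.eventually_nhds_iff.mp hev with ⟨ε0, hε0, hball⟩
    refine ⟨ε0, hε0, fun ε hε hεlt t ht => ?_⟩
    have hGr : G ‖ε‖ < δ := hball (by simpa [abs_of_nonneg (norm_nonneg ε)] using hεlt)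
    exact (main ε hε t ht).trans (mul_le_mul_of_nonneg_right hGr.le (norm_nonneg _))
  refine ⟨part1, ?_⟩
  rcases part1 (1/2) (by norm_num) with ⟨ε0, hε0, hbd⟩
  refine ⟨ε0, hε0, fun ε hε hεlt t ht => ?_⟩
  have hr : (0:ℝ) < ‖ε‖ := norm_pos_iff.mpr hε
  have ht0 : t ≠ 0 := by
    intro h
    rw [h, norm_zero] at ht
    exact absurd ht.symm (ne_of_gt (Real.rpow_pos_of_pos hr μ))
  have hdpos : (0:ℝ) < ‖a j1 * t ^ k j1‖ := by
    rw [norm_mul, norm_pow]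
    exact mul_pos haj1n (pow_pos (norm_pos_iff.mpr ht0) _)
  calc ‖((∑ l ∈ Finset.Icc 1 q, a l * ε ^ (m l - m j1) * t ^ k l)
            + a 0 * ε ^ (m 0 - m j1)) - a j1 * t ^ k j1‖
      ≤ (1/2) * ‖a j1 * t ^ k j1‖ := hbd ε hε hεlt t ht
    _ < ‖a j1 * t ^ k j1‖ := by linarith
end

section
/- Let β > 0 and μ > 1. If f, g ∈ E_{(β,μ)}, then the convolution f ∗ g(m) = ∫_{−∞}^{+∞} f(m − m₁) g(m₁) dm₁ also belongs to E_{(β,μ)}. -/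
open MeasureTheory Real

private lemma conv_key_aux (μ a b : ℝ) (hμ : 0 ≤ μ) (ha : 0 ≤ b) (hba : b ≤ a) :
    (1+a+b)^μ * ((1+a)^μ * (1+b)^μ)⁻¹ ≤ 2^μ * (((1+a)^μ)⁻¹ + ((1+b)^μ)⁻¹) := by
  have h0a : (0:ℝ) < 1 + a := by linarith
  have h0b : (0:ℝ) < 1 + b := by linarith
  have hA : 0 < (1+a)^μ := Real.rpow_pos_of_pos h0a μ
  have hB : 0 < (1+b)^μ := Real.rpow_pos_of_pos h0b μ
  have hS : (1+a+b)^μ ≤ 2^μ * (1+a)^μ := by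
    rw [← Real.mul_rpow (by norm_num) h0a.le]
    exact Real.rpow_le_rpow (by positivity) (by linarith) hμ
  calc (1+a+b)^μ * ((1+a)^μ * (1+b)^μ)⁻¹
      ≤ (2^μ * (1+a)^μ) * ((1+a)^μ * (1+b)^μ)⁻¹ := by gcongr
    _ = 2^μ * ((1+b)^μ)⁻¹ := by field_simp
    _ ≤ 2^μ * (((1+a)^μ)⁻¹ + ((1+b)^μ)⁻¹) := by
        have h1 : (0:ℝ) ≤ ((1+a)^μ)⁻¹ := by positivity
        have h2 : (0:ℝ) ≤ (2:ℝ)^μ := by positivity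
        nlinarith

private lemma conv_key (μ a b : ℝ) (hμ : 0 ≤ μ) (ha : 0 ≤ a) (hb : 0 ≤ b) :
    (1+a+b)^μ * ((1+a)^μ * (1+b)^μ)⁻¹ ≤ 2^μ * (((1+a)^μ)⁻¹ + ((1+b)^μ)⁻¹) := by
  rcases le_total b a with h | h
  · exact conv_key_aux μ a b hμ hb h
  · have := conv_key_aux μ b a hμ ha h
    calc (1+a+b)^μ * ((1+a)^μ * (1+b)^μ)⁻¹
        = (1+b+a)^μ * ((1+b)^μ * (1+a)^μ)⁻¹ := by ring_nf
      _ ≤ 2^μ * (((1+b)^μ)⁻¹ + ((1+a)^μ)⁻¹) := this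
      _ = 2^μ * (((1+a)^μ)⁻¹ + ((1+b)^μ)⁻¹) := by ring

/-- Stability of `E_{(β,μ)}` under convolution: if `f, g` satisfy the weighted bounds
`(1+|x|)^μ e^{β|x|} |f(x)| ≤ C_f` (and similarly for `g`), then the convolution
`f ∗ g (x) = ∫ f(x-y) g(y) dy` also has finite `E_{(β,μ)}`-norm. -/
theorem stmt_3 (β μ : ℝ) (hβ : 0 < β) (hμ : 1 < μ) (f g : ℝ → ℂ)
    (hf : Continuous f) (hg : Continuous g) (Cf Cg : ℝ)
    (hfb : ∀ x : ℝ, (1 + |x|) ^ μ * Real.exp (β * |x|) * ‖f x‖ ≤ Cf)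
    (hgb : ∀ x : ℝ, (1 + |x|) ^ μ * Real.exp (β * |x|) * ‖g x‖ ≤ Cg) :
    ∃ C : ℝ, ∀ x : ℝ,
      (1 + |x|) ^ μ * Real.exp (β * |x|) * ‖∫ y : ℝ, f (x - y) * g y‖ ≤ C := by
  have hμ0 : 0 ≤ μ := by linarith
  have hCf : 0 ≤ Cf := le_trans (by positivity) (hfb 0)
  have hCg : 0 ≤ Cg := le_trans (by positivity) (hgb 0)
  set K : ℝ := Cf * Cg * 2^μ with hK
  have hI : Integrable (fun y : ℝ => ((1+|y|)^μ)⁻¹) := by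
    have h1 : ((Module.finrank ℝ ℝ : ℝ)) < μ := by
      simp [Module.finrank_self]; exact hμ
    have h2 : (fun y : ℝ => ((1+|y|)^μ)⁻¹) = fun y : ℝ => (1+|y|)^(-μ) := by
      funext y; rw [Real.rpow_neg (by positivity)]
    rw [h2]
    simpa [Real.norm_eq_abs] using integrable_one_add_norm (E := ℝ) (μ := volume) h1
  refine ⟨K * ((∫ y : ℝ, ((1+|y|)^μ)⁻¹) + ∫ y : ℝ, ((1+|y|)^μ)⁻¹), fun x => ?_⟩
  have hmaj : Integrable (fun y : ℝ =>
      K * (((1+|x-y|)^μ)⁻¹ + ((1+|y|)^μ)⁻¹)) :=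
    ((hI.comp_sub_left x).add hI).const_mul K
  have hpt : ∀ y : ℝ, (1 + |x|)^μ * Real.exp (β * |x|) * ‖f (x - y) * g y‖ ≤
      K * (((1+|x-y|)^μ)⁻¹ + ((1+|y|)^μ)⁻¹) := by
    intro y
    set a := |x - y| with hadef
    set b := |y| with hbdef
    have ha : 0 ≤ a := abs_nonneg _
    have hb : 0 ≤ b := abs_nonneg _
    have hab : |x| ≤ a + b := by
      calc |x| = |(x - y) + y| := by ring_nf
        _ ≤ a + b := abs_add_le _ _
    have h0a : (0:ℝ) < 1 + a := by linarith
    have h0b : (0:ℝ) < 1 + b := by linarith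
    have hA : 0 < (1+a)^μ := Real.rpow_pos_of_pos h0a μ
    have hB : 0 < (1+b)^μ := Real.rpow_pos_of_pos h0b μ
    have hfbd : ‖f (x - y)‖ ≤ Cf / ((1+a)^μ * Real.exp (β*a)) := by
      rw [le_div_iff₀ (by positivity), mul_comm]; exact hfb (x - y)
    have hgbd : ‖g y‖ ≤ Cg / ((1+b)^μ * Real.exp (β*b)) := by
      rw [le_div_iff₀ (by positivity), mul_comm]; exact hgb y
    have hexp : Real.exp (β * |x|) * (Real.exp (β*a) * Real.exp (β*b))⁻¹ ≤ 1 := by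
      rw [← div_eq_mul_inv, div_le_one (by positivity), ← Real.exp_add]
      exact Real.exp_le_exp.2 (by nlinarith)
    have hX : (1 + |x|)^μ ≤ (1+a+b)^μ :=
      Real.rpow_le_rpow (by positivity) (by linarith) hμ0
    calc (1 + |x|)^μ * Real.exp (β * |x|) * ‖f (x - y) * g y‖
        = (1 + |x|)^μ * Real.exp (β * |x|) * (‖f (x - y)‖ * ‖g y‖) := by
          rw [norm_mul]
      _ ≤ (1 + |x|)^μ * Real.exp (β * |x|) *
          ((Cf / ((1+a)^μ * Real.exp (β*a))) * (Cg / ((1+b)^μ * Real.exp (β*b)))) := by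
          gcongr
      _ = (Cf * Cg) * ((1 + |x|)^μ * ((1+a)^μ * (1+b)^μ)⁻¹) *
          (Real.exp (β * |x|) * (Real.exp (β*a) * Real.exp (β*b))⁻¹) := by
          field_simp
      _ ≤ (Cf * Cg) * ((1+a+b)^μ * ((1+a)^μ * (1+b)^μ)⁻¹) * 1 := by
          gcongr
      _ ≤ (Cf * Cg) * (2^μ * (((1+a)^μ)⁻¹ + ((1+b)^μ)⁻¹)) * 1 := by
          exact mul_le_mul_of_nonneg_right (mul_le_mul_of_nonneg_left
            (conv_key μ a b hμ0 ha hb) (by positivity)) zero_le_one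
      _ = K * (((1+a)^μ)⁻¹ + ((1+b)^μ)⁻¹) := by rw [hK]; ring
  calc (1 + |x|)^μ * Real.exp (β * |x|) * ‖∫ y : ℝ, f (x - y) * g y‖
      ≤ (1 + |x|)^μ * Real.exp (β * |x|) * ∫ y : ℝ, ‖f (x - y) * g y‖ := by
        gcongr
        exact norm_integral_le_integral_norm _
    _ = ∫ y : ℝ, (1 + |x|)^μ * Real.exp (β * |x|) * ‖f (x - y) * g y‖ :=
        (integral_const_mul _ _).symm
    _ ≤ ∫ y : ℝ, K * (((1+|x-y|)^μ)⁻¹ + ((1+|y|)^μ)⁻¹) :=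
        integral_mono_of_nonneg (ae_of_all _ fun y => by positivity) hmaj
          (ae_of_all _ hpt)
    _ = K * ((∫ y : ℝ, ((1+|x-y|)^μ)⁻¹) + ∫ y : ℝ, ((1+|y|)^μ)⁻¹) := by
        rw [integral_const_mul, integral_add (hI.comp_sub_left x) hI]
    _ = K * ((∫ y : ℝ, ((1+|y|)^μ)⁻¹) + ∫ y : ℝ, ((1+|y|)^μ)⁻¹) := by
        rw [integral_sub_left_eq_self (fun y : ℝ => ((1+|y|)^μ)⁻¹) volume x]
end

section
/- Let Q₁, Q₂, R ∈ ℂ[X] with deg(R) ≥ deg(Q₁), deg(R) ≥ deg(Q₂), and R(im) ≠ 0 for all m ∈ ℝ. Assume μ > max(deg(Q₁)+1, deg(Q₂)+1) and β > 0. Then there exists C₅ > 0 such that for all f, g ∈ E_{(β,μ)}, the function m ↦ (1/R(im)) ∫_{−∞}^{+∞} Q₁(i(m−m₁)) f(m−m₁) Q₂(im₁) g(m₁) dm₁ belongs to E_{(β,μ)} with norm at most C₅ ‖f‖_{(β,μ)} ‖g‖_{(β,μ)}. -/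
set_option maxHeartbeats 1000000

open MeasureTheory Real



/-- Upper bound for a polynomial along the imaginary axis. -/
lemma polyUpper' (P : Polynomial ℂ) : ∃ A : ℝ, 0 < A ∧ ∀ t : ℝ,
    ‖P.eval (Complex.I * t)‖ ≤ A * (1 + |t|) ^ (P.natDegree : ℝ) := by
  classical
  set d := P.natDegree
  refine ⟨(∑ k ∈ Finset.range (d+1), ‖P.coeff k‖) + 1, by positivity, fun t => ?_⟩
  have hb : (1:ℝ) ≤ 1 + |t| := by simp [abs_nonneg]
  have hrw : ((1 + |t|) : ℝ) ^ (d:ℝ) = (1 + |t|) ^ d := by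
    rw [Real.rpow_natCast]
  rw [hrw]
  have h1 : P.eval (Complex.I * t) = ∑ k ∈ Finset.range (d+1),
      P.coeff k * (Complex.I * t) ^ k := Polynomial.eval_eq_sum_range _
  rw [h1]
  calc ‖∑ k ∈ Finset.range (d+1), P.coeff k * (Complex.I * t) ^ k‖
      ≤ ∑ k ∈ Finset.range (d+1), ‖P.coeff k * (Complex.I * t) ^ k‖ :=
        norm_sum_le _ _
    _ ≤ ∑ k ∈ Finset.range (d+1), ‖P.coeff k‖ * (1 + |t|) ^ d := by
        refine Finset.sum_le_sum fun k hk => ?_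
        have hk' : k < d + 1 := Finset.mem_range.mp hk
        rw [norm_mul]
        refine mul_le_mul_of_nonneg_left ?_ (norm_nonneg _)
        have : ‖(Complex.I * t) ^ k‖ = |t| ^ k := by
          rw [norm_pow, norm_mul, Complex.norm_I, one_mul, Complex.norm_real,
            Real.norm_eq_abs]
        rw [this]
        calc |t| ^ k ≤ (1 + |t|) ^ k :=
              pow_le_pow_left₀ (abs_nonneg t) (by linarith) k
          _ ≤ (1 + |t|) ^ d := by
              refine pow_le_pow_right₀ hb ?_
              omega
    _ = (∑ k ∈ Finset.range (d+1), ‖P.coeff k‖) * (1 + |t|) ^ d := by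
        rw [Finset.sum_mul]
    _ ≤ ((∑ k ∈ Finset.range (d+1), ‖P.coeff k‖) + 1) * (1 + |t|) ^ d := by
        have : (0:ℝ) ≤ (1 + |t|) ^ d := by positivity
        nlinarith



lemma polyLower' (R : Polynomial ℂ) (hR : ∀ x : ℝ, R.eval (Complex.I * x) ≠ 0) :
    ∃ c : ℝ, 0 < c ∧ ∀ x : ℝ,
      c * (1 + |x|) ^ (R.natDegree : ℝ) ≤ ‖R.eval (Complex.I * x)‖ := by
  classical
  set d := R.natDegree with hd
  have hcont : Continuous fun x : ℝ => ‖R.eval (Complex.I * x)‖ := by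
    fun_prop
  -- the norm of I * t
  have hnorm : ∀ t : ℝ, ‖(Complex.I * (t:ℂ))‖ = |t| := fun t => by
    rw [norm_mul, Complex.norm_I, one_mul, Complex.norm_real, Real.norm_eq_abs]
  rcases Nat.eq_zero_or_pos d with hd0 | hdpos
  · -- constant polynomial
    refine ⟨‖R.eval 0‖, ?_, fun x => ?_⟩
    · have := hR 0
      simp only [Complex.ofReal_zero, mul_zero] at this
      exact norm_pos_iff.mpr this
    · have hconst : R.eval (Complex.I * x) = R.eval 0 := by
        have : R = Polynomial.C (R.coeff 0) := Polynomial.eq_C_of_natDegree_eq_zero hd0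
        rw [this]; simp
      rw [hconst, hd0]
      simp
  · -- d ≥ 1
    set L := ‖R.leadingCoeff‖ with hL
    have hR0 : R ≠ 0 := by
      intro h
      exact hR 0 (by simp [h])
    have hLpos : 0 < L := norm_pos_iff.mpr (Polynomial.leadingCoeff_ne_zero.mpr hR0)
    set S := ∑ k ∈ Finset.range d, ‖R.coeff k‖ with hS
    have hSnn : 0 ≤ S := Finset.sum_nonneg fun _ _ => norm_nonneg _
    set M : ℝ := max 1 (2 * (S + 1) / L) with hM
    have hM1 : (1:ℝ) ≤ M := le_max_left _ _
    -- tail estimate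
    have htail : ∀ x : ℝ, M ≤ |x| →
        L / 2 ^ (d+1) * (1 + |x|) ^ d ≤ ‖R.eval (Complex.I * x)‖ := by
      intro x hx
      have hx1 : (1:ℝ) ≤ |x| := le_trans hM1 hx
      have hx0 : (0:ℝ) < |x| := lt_of_lt_of_le one_pos hx1
      have hxL : 2 * (S + 1) / L ≤ |x| := le_trans (le_max_right _ _) hx
      have hxL' : 2 * (S + 1) ≤ L * |x| := by
        rw [div_le_iff₀ hLpos] at hxL; linarith [hxL]
      have heval : R.eval (Complex.I * x) =
          (∑ k ∈ Finset.range d, R.coeff k * (Complex.I * x) ^ k)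
            + R.coeff d * (Complex.I * x) ^ d := by
        rw [Polynomial.eval_eq_sum_range, Finset.sum_range_succ]
      have hlead : ‖R.coeff d * (Complex.I * x) ^ d‖ = L * |x| ^ d := by
        rw [norm_mul, norm_pow, hnorm, hL, Polynomial.leadingCoeff]
      have hrest : ‖∑ k ∈ Finset.range d, R.coeff k * (Complex.I * x) ^ k‖
          ≤ S * |x| ^ (d - 1) := by
        calc ‖∑ k ∈ Finset.range d, R.coeff k * (Complex.I * x) ^ k‖
            ≤ ∑ k ∈ Finset.range d, ‖R.coeff k * (Complex.I * x) ^ k‖ :=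
              norm_sum_le _ _
          _ ≤ ∑ k ∈ Finset.range d, ‖R.coeff k‖ * |x| ^ (d-1) := by
              refine Finset.sum_le_sum fun k hk => ?_
              have hk' : k < d := Finset.mem_range.mp hk
              rw [norm_mul, norm_pow, hnorm]
              refine mul_le_mul_of_nonneg_left ?_ (norm_nonneg _)
              exact pow_le_pow_right₀ hx1 (by omega)
          _ = S * |x| ^ (d-1) := by rw [Finset.sum_mul]
      have hlow : L * |x| ^ d - S * |x| ^ (d-1) ≤ ‖R.eval (Complex.I * x)‖ := by
        rw [heval]
        set a := ∑ k ∈ Finset.range d, R.coeff k * (Complex.I * x) ^ k with ha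
        set b := R.coeff d * (Complex.I * x) ^ d with hb
        have h1 : ‖b‖ ≤ ‖a + b‖ + ‖a‖ := by
          calc ‖b‖ = ‖a + b - a‖ := by congr 1; ring
            _ ≤ ‖a + b‖ + ‖a‖ := norm_sub_le _ _
        rw [hlead] at h1
        linarith
      -- L |x|^d - S |x|^{d-1} ≥ (L/2) |x|^d
      have hkey : L / 2 * |x| ^ d ≤ L * |x| ^ d - S * |x| ^ (d-1) := by
        have hpow : |x| ^ d = |x| ^ (d-1) * |x| := by
          rw [← pow_succ]
          congr 1
          omega
        rw [hpow]
        have hpnn : (0:ℝ) ≤ |x| ^ (d-1) := by positivity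
        nlinarith [mul_le_mul_of_nonneg_left hxL' hpnn]
      -- (1+|x|)^d ≤ (2|x|)^d
      have hup : (1 + |x|) ^ d ≤ 2 ^ d * |x| ^ d := by
        rw [← mul_pow]
        exact pow_le_pow_left₀ (by positivity) (by linarith) d
      have h2 : L / 2 ^ (d+1) * (1 + |x|) ^ d ≤ L / 2 * |x| ^ d := by
        have := mul_le_mul_of_nonneg_left hup
          (le_of_lt (by positivity : (0:ℝ) < L / 2 ^ (d+1)))
        calc L / 2 ^ (d+1) * (1 + |x|) ^ d
            ≤ L / 2 ^ (d+1) * (2 ^ d * |x| ^ d) := this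
          _ = L / 2 * |x| ^ d := by
              rw [pow_succ]
              field_simp
      linarith
    -- compact part
    have hcompact : ∃ ε : ℝ, 0 < ε ∧ ∀ x ∈ Set.Icc (-M) M,
        ε ≤ ‖R.eval (Complex.I * x)‖ := by
      have hne : (Set.Icc (-M) M).Nonempty := ⟨0, by constructor <;> linarith⟩
      obtain ⟨x0, hx0mem, hx0min⟩ := (isCompact_Icc).exists_isMinOn hne
        (hcont.continuousOn)
      exact ⟨‖R.eval (Complex.I * x0)‖, norm_pos_iff.mpr (hR x0),
        fun x hx => hx0min hx⟩
    obtain ⟨ε, hε, hεle⟩ := hcompact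
    refine ⟨min (L / 2 ^ (d+1)) (ε / (1 + M) ^ d), ?_, fun x => ?_⟩
    · have : (0:ℝ) < ε / (1 + M) ^ d := by positivity
      exact lt_min (by positivity) this
    · rw [Real.rpow_natCast]
      rcases le_or_gt M |x| with hx | hx
      · calc min (L / 2 ^ (d+1)) (ε / (1 + M) ^ d) * (1 + |x|) ^ d
            ≤ L / 2 ^ (d+1) * (1 + |x|) ^ d := by
              apply mul_le_mul_of_nonneg_right (min_le_left _ _) (by positivity)
          _ ≤ ‖R.eval (Complex.I * x)‖ := htail x hx
      · have hmem : x ∈ Set.Icc (-M) M := by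
          constructor <;> [linarith [neg_abs_le x, hx.le]; linarith [le_abs_self x, hx.le]]
        calc min (L / 2 ^ (d+1)) (ε / (1 + M) ^ d) * (1 + |x|) ^ d
            ≤ ε / (1 + M) ^ d * (1 + M) ^ d := by
              apply mul_le_mul (min_le_right _ _)
                (pow_le_pow_left₀ (by positivity) (by linarith [hx.le]) d)
                (by positivity) (by positivity)
          _ = ε := by field_simp
          _ ≤ ‖R.eval (Complex.I * x)‖ := hεle x hmem



lemma oneAddIntegrable' (a : ℝ) (ha : 1 < a) :
    Integrable (fun y : ℝ => (1 + |y|) ^ (-a)) := by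
  have h := integrable_one_add_norm (E := ℝ) (μ := volume) (r := a)
    (by simpa using ha)
  simpa [Real.norm_eq_abs] using h

lemma peetre_pt' (a b : ℝ) (ha : 0 ≤ a) (hb : 0 ≤ b) (x y : ℝ) :
    (1 + |x - y|) ^ (-a) * (1 + |y|) ^ (-b) ≤
      (1 + |x| / 2) ^ (-(min a b)) *
        ((1 + |x - y|) ^ (-a) + (1 + |y|) ^ (-b)) := by
  set m := min a b with hm
  have hm0 : 0 ≤ m := le_min ha hb
  have h1 : (1:ℝ) ≤ 1 + |x - y| := by simp [abs_nonneg]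
  have h2 : (1:ℝ) ≤ 1 + |y| := by simp [abs_nonneg]
  have h3 : (0:ℝ) < 1 + |x| / 2 := by positivity
  have hA : (0:ℝ) ≤ (1 + |x - y|) ^ (-a) := rpow_nonneg (by linarith) _
  have hB : (0:ℝ) ≤ (1 + |y|) ^ (-b) := rpow_nonneg (by linarith) _
  rcases le_total (|x| / 2) |y| with h | h
  · -- |y| ≥ |x|/2 : bound the second factor
    have key : (1 + |y|) ^ (-b) ≤ (1 + |x| / 2) ^ (-m) := by
      calc (1 + |y|) ^ (-b) ≤ (1 + |x| / 2) ^ (-b) :=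
            Real.rpow_le_rpow_of_nonpos h3 (by linarith) (by linarith)
        _ ≤ (1 + |x| / 2) ^ (-m) :=
            Real.rpow_le_rpow_of_exponent_le (by linarith [abs_nonneg x]) 
              (by simp only [neg_le_neg_iff, hm]; exact min_le_right a b)
    calc (1 + |x - y|) ^ (-a) * (1 + |y|) ^ (-b)
        ≤ (1 + |x - y|) ^ (-a) * (1 + |x| / 2) ^ (-m) :=
          mul_le_mul_of_nonneg_left key hA
      _ = (1 + |x| / 2) ^ (-m) * (1 + |x - y|) ^ (-a) := by ring
      _ ≤ (1 + |x| / 2) ^ (-m) *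
            ((1 + |x - y|) ^ (-a) + (1 + |y|) ^ (-b)) := by
          apply mul_le_mul_of_nonneg_left _ (rpow_nonneg h3.le _)
          linarith
  · -- |y| ≤ |x|/2 hence |x - y| ≥ |x|/2
    have hxy : |x| / 2 ≤ |x - y| := by
      have := abs_sub_abs_le_abs_sub x y
      linarith
    have key : (1 + |x - y|) ^ (-a) ≤ (1 + |x| / 2) ^ (-m) := by
      calc (1 + |x - y|) ^ (-a) ≤ (1 + |x| / 2) ^ (-a) :=
            Real.rpow_le_rpow_of_nonpos h3 (by linarith) (by linarith)
        _ ≤ (1 + |x| / 2) ^ (-m) :=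
            Real.rpow_le_rpow_of_exponent_le (by linarith [abs_nonneg x])
              (by simp only [neg_le_neg_iff, hm]; exact min_le_left a b)
    calc (1 + |x - y|) ^ (-a) * (1 + |y|) ^ (-b)
        ≤ (1 + |x| / 2) ^ (-m) * (1 + |y|) ^ (-b) :=
          mul_le_mul_of_nonneg_right key hB
      _ ≤ (1 + |x| / 2) ^ (-m) *
            ((1 + |x - y|) ^ (-a) + (1 + |y|) ^ (-b)) := by
          apply mul_le_mul_of_nonneg_left _ (rpow_nonneg h3.le _)
          linarith



/-- Banach algebra estimate for the twisted convolution
`f ⋆ g (x) = (1/R(ix)) ∫ Q₁(i(x-y)) f(x-y) Q₂(iy) g(y) dy` on `E_{(β,μ)}`: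
there is `C₅ > 0` with `‖f ⋆ g‖_{(β,μ)} ≤ C₅ ‖f‖_{(β,μ)} ‖g‖_{(β,μ)}`. -/
theorem stmt_4 (Q1 Q2 R : Polynomial ℂ)
    (hd1 : Q1.natDegree ≤ R.natDegree) (hd2 : Q2.natDegree ≤ R.natDegree)
    (hR : ∀ x : ℝ, R.eval (Complex.I * x) ≠ 0)
    (β μ : ℝ) (hβ : 0 < β)
    (hμ1 : (Q1.natDegree : ℝ) + 1 < μ) (hμ2 : (Q2.natDegree : ℝ) + 1 < μ) :
    ∃ C5 : ℝ, 0 < C5 ∧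
      ∀ f g : ℝ → ℂ, Continuous f → Continuous g →
      ∀ Cf Cg : ℝ,
        (∀ x : ℝ, (1 + |x|) ^ μ * Real.exp (β * |x|) * ‖f x‖ ≤ Cf) →
        (∀ x : ℝ, (1 + |x|) ^ μ * Real.exp (β * |x|) * ‖g x‖ ≤ Cg) →
        ∀ x : ℝ, (1 + |x|) ^ μ * Real.exp (β * |x|) *
            ‖(R.eval (Complex.I * x))⁻¹ *
              ∫ y : ℝ, Q1.eval (Complex.I * (x - y)) * f (x - y)
                * Q2.eval (Complex.I * y) * g y‖
          ≤ C5 * Cf * Cg := by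
  classical
  obtain ⟨A1, hA1, hQ1⟩ := polyUpper' Q1
  obtain ⟨A2, hA2, hQ2⟩ := polyUpper' Q2
  obtain ⟨c, hc, hRlow⟩ := polyLower' R hR
  set a : ℝ := μ - (Q1.natDegree : ℝ) with ha_def
  set b : ℝ := μ - (Q2.natDegree : ℝ) with hb_def
  have ha : 1 < a := by simp only [ha_def]; linarith
  have hb : 1 < b := by simp only [hb_def]; linarith
  set m : ℝ := min a b with hm_def
  have hm1 : 1 < m := lt_min ha hb
  have hm0 : (0:ℝ) ≤ m := by linarith
  have hmR : μ - (R.natDegree : ℝ) ≤ m := by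
    have h1 : (Q1.natDegree : ℝ) ≤ (R.natDegree : ℝ) := by exact_mod_cast hd1
    have h2 : (Q2.natDegree : ℝ) ≤ (R.natDegree : ℝ) := by exact_mod_cast hd2
    exact le_min (by simp only [ha_def]; linarith) (by simp only [hb_def]; linarith)
  have hint_a : Integrable (fun y : ℝ => (1 + |y|) ^ (-a)) := oneAddIntegrable' a ha
  have hint_b : Integrable (fun y : ℝ => (1 + |y|) ^ (-b)) := oneAddIntegrable' b hb
  set Ia : ℝ := ∫ y : ℝ, (1 + |y|) ^ (-a) with hIa_def
  set Ib : ℝ := ∫ y : ℝ, (1 + |y|) ^ (-b) with hIb_def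
  set K : ℝ := Ia + Ib with hK_def
  have hK0 : 0 ≤ K := by
    have h1 : 0 ≤ Ia := integral_nonneg fun y => rpow_nonneg (by positivity) _
    have h2 : 0 ≤ Ib := integral_nonneg fun y => rpow_nonneg (by positivity) _
    linarith
  set N : ℝ := A1 * A2 * 2 ^ m * K * c⁻¹ with hN_def
  have hN0 : 0 ≤ N := by
    have : (0:ℝ) ≤ (2:ℝ) ^ m := rpow_nonneg (by norm_num) _
    have : (0:ℝ) ≤ c⁻¹ := inv_nonneg.mpr hc.le
    positivity
  refine ⟨N + 1, by linarith, ?_⟩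
  intro f g hfc hgc Cf Cg hf hg x
  -- nonnegativity of Cf, Cg
  have hCf : 0 ≤ Cf := le_trans (by positivity) (hf 0)
  have hCg : 0 ≤ Cg := le_trans (by positivity) (hg 0)
  -- pointwise decay of f and g
  have hdecay : ∀ (h : ℝ → ℂ) (Ch : ℝ),
      (∀ y : ℝ, (1 + |y|) ^ μ * Real.exp (β * |y|) * ‖h y‖ ≤ Ch) →
      ∀ y : ℝ, ‖h y‖ ≤ Ch * ((1 + |y|) ^ (-μ) * Real.exp (-(β * |y|))) := by
    intro h Ch hh y
    have hw : (0:ℝ) < (1 + |y|) ^ μ * Real.exp (β * |y|) := by positivity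
    have h2 : (1 + |y|) ^ (-μ) * Real.exp (-(β * |y|))
        = ((1 + |y|) ^ μ * Real.exp (β * |y|))⁻¹ := by
      rw [Real.rpow_neg (by positivity), Real.exp_neg, mul_inv]
    rw [h2, ← div_eq_mul_inv, le_div_iff₀ hw]
    calc ‖h y‖ * ((1 + |y|) ^ μ * Real.exp (β * |y|))
        = (1 + |y|) ^ μ * Real.exp (β * |y|) * ‖h y‖ := by ring
      _ ≤ Ch := hh y
  have hfd := hdecay f Cf hf
  have hgd := hdecay g Cg hg
  -- combining rpow exponents
  have hcomb1 : ∀ t : ℝ, (1 + |t|) ^ ((Q1.natDegree : ℝ)) * (1 + |t|) ^ (-μ)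
      = (1 + |t|) ^ (-a) := fun t => by
    rw [← Real.rpow_add (by positivity)]
    congr 1
    simp only [ha_def]; ring
  have hcomb2 : ∀ t : ℝ, (1 + |t|) ^ ((Q2.natDegree : ℝ)) * (1 + |t|) ^ (-μ)
      = (1 + |t|) ^ (-b) := fun t => by
    rw [← Real.rpow_add (by positivity)]
    congr 1
    simp only [hb_def]; ring
  set CC : ℝ := A1 * Cf * (A2 * Cg) * Real.exp (-(β * |x|)) with hCC_def
  have hCC0 : 0 ≤ CC := by positivity
  -- pointwise bound on the integrand
  have hFG2 : ∀ y : ℝ,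
      ‖Q1.eval (Complex.I * (x - y)) * f (x - y) * Q2.eval (Complex.I * y) * g y‖
        ≤ CC * ((1 + |x - y|) ^ (-a) * (1 + |y|) ^ (-b)) := by
    intro y
    have hexp : Real.exp (-(β * |x - y|)) * Real.exp (-(β * |y|))
        ≤ Real.exp (-(β * |x|)) := by
      rw [← Real.exp_add]
      apply Real.exp_le_exp.mpr
      have htri : |x| ≤ |x - y| + |y| := by
        have := abs_add_le (x - y) y
        simpa using this
      nlinarith
    calc ‖Q1.eval (Complex.I * (x - y)) * f (x - y) * Q2.eval (Complex.I * y) * g y‖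
        = ‖Q1.eval (Complex.I * (x - y))‖ * ‖f (x - y)‖
            * ‖Q2.eval (Complex.I * y)‖ * ‖g y‖ := by
          rw [norm_mul, norm_mul, norm_mul]
      _ ≤ (A1 * (1 + |x - y|) ^ ((Q1.natDegree : ℝ)))
            * (Cf * ((1 + |x - y|) ^ (-μ) * Real.exp (-(β * (|x - y|)))))
            * (A2 * (1 + |y|) ^ ((Q2.natDegree : ℝ)))
            * (Cg * ((1 + |y|) ^ (-μ) * Real.exp (-(β * |y|)))) := by
          have b1 := hQ1 (x - y)
          rw [Complex.ofReal_sub] at b1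
          have b2 := hfd (x - y)
          have b3 := hQ2 y
          have b4 := hgd y
          gcongr <;> positivity
      _ = A1 * Cf * (A2 * Cg)
            * (((1 + |x - y|) ^ ((Q1.natDegree : ℝ)) * (1 + |x - y|) ^ (-μ))
              * ((1 + |y|) ^ ((Q2.natDegree : ℝ)) * (1 + |y|) ^ (-μ)))
            * (Real.exp (-(β * |x - y|)) * Real.exp (-(β * |y|))) := by ring
      _ ≤ A1 * Cf * (A2 * Cg)
            * (((1 + |x - y|) ^ ((Q1.natDegree : ℝ)) * (1 + |x - y|) ^ (-μ))
              * ((1 + |y|) ^ ((Q2.natDegree : ℝ)) * (1 + |y|) ^ (-μ)))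
            * Real.exp (-(β * |x|)) := by
          have hnn : (0:ℝ) ≤ A1 * Cf * (A2 * Cg)
              * (((1 + |x - y|) ^ ((Q1.natDegree : ℝ)) * (1 + |x - y|) ^ (-μ))
                * ((1 + |y|) ^ ((Q2.natDegree : ℝ)) * (1 + |y|) ^ (-μ))) := by
            positivity
          exact mul_le_mul_of_nonneg_left hexp hnn
      _ = CC * (((1 + |x - y|) ^ ((Q1.natDegree : ℝ)) * (1 + |x - y|) ^ (-μ))
              * ((1 + |y|) ^ ((Q2.natDegree : ℝ)) * (1 + |y|) ^ (-μ))) := by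
          rw [hCC_def]; ring
      _ = CC * ((1 + |x - y|) ^ (-a) * (1 + |y|) ^ (-b)) := by
          rw [hcomb1, hcomb2]
  -- integrability facts
  have hcont_a : Continuous fun y : ℝ => (1 + |x - y|) ^ (-a) := by
    apply Continuous.rpow_const
    · fun_prop
    · intro y; left; positivity
  have hcont_b : Continuous fun y : ℝ => (1 + |y|) ^ (-b) := by
    apply Continuous.rpow_const
    · fun_prop
    · intro y; left; positivity
  have hint_xa : Integrable (fun y : ℝ => (1 + |x - y|) ^ (-a)) :=
    hint_a.comp_sub_left x
  have hprod_int : Integrable (fun y : ℝ => (1 + |x - y|) ^ (-a) * (1 + |y|) ^ (-b)) := by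
    refine hint_b.mono' ((hcont_a.mul hcont_b).aestronglyMeasurable) ?_
    filter_upwards with y
    rw [Real.norm_eq_abs, abs_of_nonneg (by positivity)]
    have h1 : (1 + |x - y|) ^ (-a) ≤ 1 :=
      rpow_le_one_of_one_le_of_nonpos (by simp [abs_nonneg]) (by linarith)
    have h2 : (0:ℝ) ≤ (1 + |y|) ^ (-b) := rpow_nonneg (by positivity) _
    nlinarith [rpow_nonneg (by positivity : (0:ℝ) ≤ 1 + |x - y|) (-a)]
  have hG2_int : Integrable (fun y : ℝ =>
      CC * ((1 + |x - y|) ^ (-a) * (1 + |y|) ^ (-b))) := hprod_int.const_mul CC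
  -- norm of integral bound
  have hI1 : ‖∫ y : ℝ, Q1.eval (Complex.I * (x - y)) * f (x - y)
      * Q2.eval (Complex.I * y) * g y‖
      ≤ ∫ y : ℝ, CC * ((1 + |x - y|) ^ (-a) * (1 + |y|) ^ (-b)) :=
    norm_integral_le_of_norm_le hG2_int (Filter.Eventually.of_forall hFG2)
  -- Peetre bound on the product integral
  have hH_int : Integrable (fun y : ℝ =>
      (1 + |x| / 2) ^ (-m) * ((1 + |x - y|) ^ (-a) + (1 + |y|) ^ (-b))) :=
    (hint_xa.add hint_b).const_mul _
  have hI2 : (∫ y : ℝ, (1 + |x - y|) ^ (-a) * (1 + |y|) ^ (-b))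
      ≤ (1 + |x| / 2) ^ (-m) * K := by
    have step1 : (∫ y : ℝ, (1 + |x - y|) ^ (-a) * (1 + |y|) ^ (-b))
        ≤ ∫ y : ℝ, (1 + |x| / 2) ^ (-m) * ((1 + |x - y|) ^ (-a) + (1 + |y|) ^ (-b)) :=
      integral_mono hprod_int hH_int (fun y => peetre_pt' a b (by linarith) (by linarith) x y)
    have step2 : (∫ y : ℝ, (1 + |x| / 2) ^ (-m)
        * ((1 + |x - y|) ^ (-a) + (1 + |y|) ^ (-b))) = (1 + |x| / 2) ^ (-m) * K := by
      rw [MeasureTheory.integral_const_mul, integral_add hint_xa hint_b]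
      have htrans : (∫ y : ℝ, (1 + |x - y|) ^ (-a)) = Ia :=
        integral_sub_left_eq_self (fun t : ℝ => (1 + |t|) ^ (-a)) volume x
      rw [htrans, hK_def]
    linarith [step1, step2.le, step2.ge]
  have hhalf : (1 + |x| / 2) ^ (-m) ≤ 2 ^ m * (1 + |x|) ^ (-m) := by
    have e1 : ((1 + |x|) / 2) ^ (-m) = 2 ^ m * (1 + |x|) ^ (-m) := by
      rw [Real.div_rpow (by positivity) (by norm_num),
        Real.rpow_neg (by norm_num : (0:ℝ) ≤ 2), div_eq_mul_inv, inv_inv]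
      ring
    calc (1 + |x| / 2) ^ (-m) ≤ ((1 + |x|) / 2) ^ (-m) :=
          Real.rpow_le_rpow_of_nonpos (by positivity) (by linarith [abs_nonneg x])
            (by linarith)
      _ = 2 ^ m * (1 + |x|) ^ (-m) := e1
  have hIfull : ‖∫ y : ℝ, Q1.eval (Complex.I * (x - y)) * f (x - y)
      * Q2.eval (Complex.I * y) * g y‖
      ≤ CC * (2 ^ m * (1 + |x|) ^ (-m) * K) := by
    have h2 : (∫ y : ℝ, CC * ((1 + |x - y|) ^ (-a) * (1 + |y|) ^ (-b)))
        = CC * ∫ y : ℝ, (1 + |x - y|) ^ (-a) * (1 + |y|) ^ (-b) :=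
      MeasureTheory.integral_const_mul _ _
    have h3 : CC * (∫ y : ℝ, (1 + |x - y|) ^ (-a) * (1 + |y|) ^ (-b))
        ≤ CC * (2 ^ m * (1 + |x|) ^ (-m) * K) := by
      apply mul_le_mul_of_nonneg_left _ hCC0
      calc (∫ y : ℝ, (1 + |x - y|) ^ (-a) * (1 + |y|) ^ (-b))
          ≤ (1 + |x| / 2) ^ (-m) * K := hI2
        _ ≤ 2 ^ m * (1 + |x|) ^ (-m) * K := mul_le_mul_of_nonneg_right hhalf hK0
    calc ‖∫ y : ℝ, Q1.eval (Complex.I * (x - y)) * f (x - y)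
        * Q2.eval (Complex.I * y) * g y‖
        ≤ ∫ y : ℝ, CC * ((1 + |x - y|) ^ (-a) * (1 + |y|) ^ (-b)) := hI1
      _ = CC * ∫ y : ℝ, (1 + |x - y|) ^ (-a) * (1 + |y|) ^ (-b) := h2
      _ ≤ CC * (2 ^ m * (1 + |x|) ^ (-m) * K) := h3
  -- bound on the inverse
  have hRpos : (0:ℝ) < ‖R.eval (Complex.I * x)‖ := norm_pos_iff.mpr (hR x)
  have hcpos : (0:ℝ) < c * (1 + |x|) ^ ((R.natDegree : ℝ)) := by
    have : (0:ℝ) < (1 + |x|) ^ ((R.natDegree : ℝ)) := rpow_pos_of_pos (by positivity) _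
    positivity
  have hinv : ‖R.eval (Complex.I * x)‖⁻¹ ≤ (c * (1 + |x|) ^ ((R.natDegree : ℝ)))⁻¹ :=
    inv_anti₀ hcpos (hRlow x)
  -- final assembly
  rw [norm_mul, norm_inv]
  have s1 : ‖R.eval (Complex.I * x)‖⁻¹ * ‖∫ y : ℝ, Q1.eval (Complex.I * (x - y)) * f (x - y)
      * Q2.eval (Complex.I * y) * g y‖
      ≤ (c * (1 + |x|) ^ ((R.natDegree : ℝ)))⁻¹ * (CC * (2 ^ m * (1 + |x|) ^ (-m) * K)) :=
    mul_le_mul hinv hIfull (norm_nonneg _) (inv_nonneg.mpr hcpos.le)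
  have s2 : (1 + |x|) ^ μ * Real.exp (β * |x|) *
      (‖R.eval (Complex.I * x)‖⁻¹ * ‖∫ y : ℝ, Q1.eval (Complex.I * (x - y)) * f (x - y)
        * Q2.eval (Complex.I * y) * g y‖)
      ≤ (1 + |x|) ^ μ * Real.exp (β * |x|) *
        ((c * (1 + |x|) ^ ((R.natDegree : ℝ)))⁻¹ * (CC * (2 ^ m * (1 + |x|) ^ (-m) * K))) :=
    mul_le_mul_of_nonneg_left s1 (by positivity)
  have key : (1 + |x|) ^ μ * Real.exp (β * |x|) *
      ((c * (1 + |x|) ^ ((R.natDegree : ℝ)))⁻¹ * (CC * (2 ^ m * (1 + |x|) ^ (-m) * K)))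
      = N * (Cf * Cg)
        * ((1 + |x|) ^ μ * (1 + |x|) ^ (-(R.natDegree : ℝ)) * (1 + |x|) ^ (-m))
        * (Real.exp (β * |x|) * Real.exp (-(β * |x|))) := by
    rw [mul_inv, ← Real.rpow_neg (by positivity : (0:ℝ) ≤ 1 + |x|), hCC_def, hN_def]
    ring
  have hexp1 : Real.exp (β * |x|) * Real.exp (-(β * |x|)) = 1 := by
    rw [← Real.exp_add]; simp
  have hpow1 : (1 + |x|) ^ μ * (1 + |x|) ^ (-(R.natDegree : ℝ)) * (1 + |x|) ^ (-m) ≤ 1 := by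
    rw [← Real.rpow_add (by positivity), ← Real.rpow_add (by positivity)]
    apply rpow_le_one_of_one_le_of_nonpos (by simp [abs_nonneg])
    linarith
  have hpow0 : (0:ℝ) ≤ (1 + |x|) ^ μ * (1 + |x|) ^ (-(R.natDegree : ℝ)) * (1 + |x|) ^ (-m) := by
    positivity
  calc (1 + |x|) ^ μ * Real.exp (β * |x|) *
      (‖R.eval (Complex.I * x)‖⁻¹ * ‖∫ y : ℝ, Q1.eval (Complex.I * (x - y)) * f (x - y)
        * Q2.eval (Complex.I * y) * g y‖)
      ≤ N * (Cf * Cg)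
        * ((1 + |x|) ^ μ * (1 + |x|) ^ (-(R.natDegree : ℝ)) * (1 + |x|) ^ (-m))
        * (Real.exp (β * |x|) * Real.exp (-(β * |x|))) := by
        rw [← key]; exact s2
    _ = N * (Cf * Cg)
        * ((1 + |x|) ^ μ * (1 + |x|) ^ (-(R.natDegree : ℝ)) * (1 + |x|) ^ (-m)) := by
        rw [hexp1, mul_one]
    _ ≤ N * (Cf * Cg) * 1 := by
        apply mul_le_mul_of_nonneg_left hpow1 (by positivity)
    _ = N * Cf * Cg := by ring
    _ ≤ (N + 1) * Cf * Cg := by nlinarith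
end

section
/- Let f : ℝ → ℂ be continuous with |f(m)| ≤ C e^{−β|m|} and set φ(m) = i m f(m). Then for all z in the strip H_β = {z : |Im z| < β}, the derivative of the inverse Fourier transform satisfies ∂_z F⁻¹(f)(z) = F⁻¹(φ)(z). -/
/-
Differentiation under the integral sign. For `w` within `δ = (β - |Im z|) / 2` of `z`,
`|e^{iwm}| = e^{-(Im w) m} ≤ e^{(β - δ)|m|}`, so the integrand `f(m) e^{iwm}` and its `w`-derivative
`i m f(m) e^{iwm}` are dominated, uniformly in `w`, by the integrable functions `C e^{-δ|m|}` and
`C |m| e^{-δ|m|}`.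
-/

open MeasureTheory Set Complex

theorem integrable_comp_abs_of_integrableOn_Ioi {E : Type*} [NormedAddCommGroup E]
    {f : ℝ → E} (hf : IntegrableOn f (Ioi 0)) : Integrable fun x => f |x| := by
  have h_Ioi : IntegrableOn (fun x => f |x|) (Ioi 0) :=
    hf.congr_fun (fun x hx => by rw [abs_of_pos hx]) measurableSet_Ioi
  have h_Iic : IntegrableOn (fun x => f |x|) (Iic 0) := by
    have hneg : MeasurableEmbedding fun x : ℝ => -x := (Homeomorph.neg ℝ).measurableEmbedding
    rw [← Measure.map_neg_eq_self (volume : Measure ℝ), hneg.integrableOn_map_iff]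
    simp_rw [Function.comp_def, abs_neg, neg_preimage, neg_Iic, neg_zero]
    exact (integrableOn_Ici_iff_integrableOn_Ioi).mpr h_Ioi
  rw [← integrableOn_univ, ← Iic_union_Ioi (a := (0 : ℝ))]
  exact h_Iic.union h_Ioi

theorem integrable_exp_neg_mul_abs {b : ℝ} (hb : 0 < b) :
    Integrable fun x : ℝ => Real.exp (-b * |x|) :=
  integrable_comp_abs_of_integrableOn_Ioi (f := fun t => Real.exp (-b * t))
    (exp_neg_integrableOn_Ioi 0 hb)

theorem integrable_abs_mul_exp_neg_mul_abs {b : ℝ} (hb : 0 < b) :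
    Integrable fun x : ℝ => |x| * Real.exp (-b * |x|) := by
  refine integrable_comp_abs_of_integrableOn_Ioi (f := fun t => t * Real.exp (-b * t)) ?_
  simpa using integrableOn_rpow_mul_exp_neg_mul_rpow (s := 1) (p := 1) (by norm_num) one_pos hb

theorem norm_cexp_I_mul_mul_ofReal (w : ℂ) (m : ℝ) :
    ‖cexp (I * w * m)‖ = Real.exp (-w.im * m) := by
  rw [norm_exp]
  congr 1
  simp [mul_re, mul_im]

theorem norm_mul_cexp_I_mul_mul_ofReal_le {a w : ℂ} {m C β c : ℝ}
    (ha : ‖a‖ ≤ C * Real.exp (-β * |m|)) (hw : |w.im| ≤ c) :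
    ‖a * cexp (I * w * m)‖ ≤ C * Real.exp (-(β - c) * |m|) := by
  have hexp : -w.im * m ≤ c * |m| :=
    calc -w.im * m ≤ |-w.im * m| := le_abs_self _
      _ = |w.im| * |m| := by rw [abs_mul, abs_neg]
      _ ≤ c * |m| := by gcongr
  calc ‖a * cexp (I * w * m)‖ = ‖a‖ * Real.exp (-w.im * m) := by
        rw [norm_mul, norm_cexp_I_mul_mul_ofReal]
    _ ≤ C * Real.exp (-β * |m|) * Real.exp (c * |m|) :=
        mul_le_mul ha (Real.exp_le_exp.mpr hexp) (Real.exp_pos _).le ((norm_nonneg a).trans ha)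
    _ = C * Real.exp (-(β - c) * |m|) := by rw [mul_assoc, ← Real.exp_add]; ring_nf

theorem hasDerivAt_integral_mul_cexp_I_mul {f : ℝ → ℂ} (hf : AEStronglyMeasurable f volume)
    {C β : ℝ} (hbd : ∀ m : ℝ, ‖f m‖ ≤ C * Real.exp (-β * |m|)) {z : ℂ} (hz : |z.im| < β) :
    HasDerivAt (fun w : ℂ => ∫ m : ℝ, f m * cexp (I * w * m))
      (∫ m : ℝ, (I * m * f m) * cexp (I * z * m)) z := by
  set δ := (β - |z.im|) / 2 with hδ
  have hδ_pos : 0 < δ := by linarith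
  have hδ_rate : β - (|z.im| + δ) = δ := by linarith
  have him_ball : ∀ w ∈ Metric.ball z δ, |w.im| ≤ |z.im| + δ := fun w hw => by
    have h := (abs_sub_abs_le_abs_sub w.im z.im).trans (abs_im_le_norm (w - z))
    rw [← dist_eq_norm] at h
    linarith [Metric.mem_ball.mp hw]
  have hmeas : ∀ w : ℂ, AEStronglyMeasurable (fun m : ℝ => f m * cexp (I * w * m)) volume :=
    fun w => hf.mul (by fun_prop : Continuous fun m : ℝ => cexp (I * w * m)).aestronglyMeasurable
  refine (hasDerivAt_integral_of_dominated_loc_of_deriv_le (μ := volume)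
    (F' := fun w m => (I * m * f m) * cexp (I * w * m))
    (bound := fun m => C * (|m| * Real.exp (-δ * |m|))) (Metric.ball_mem_nhds z hδ_pos)
    (.of_forall hmeas) ?_ ?_ ?_ ((integrable_abs_mul_exp_neg_mul_abs hδ_pos).const_mul C) ?_).2
  · refine ((integrable_exp_neg_mul_abs hδ_pos).const_mul C).mono' (hmeas z) (.of_forall ?_)
    intro m
    simpa only [hδ_rate] using
      norm_mul_cexp_I_mul_mul_ofReal_le (w := z) (hbd m) (le_add_of_nonneg_right hδ_pos.le)
  · exact ((by fun_prop : Continuous fun m : ℝ => I * m).aestronglyMeasurable.mul hf).mul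
      (by fun_prop : Continuous fun m : ℝ => cexp (I * z * m)).aestronglyMeasurable
  · refine .of_forall fun m w hw => ?_
    have hnorm : ‖(I * m * f m) * cexp (I * w * m)‖ = |m| * ‖f m * cexp (I * w * m)‖ := by
      simp only [norm_mul, norm_I, norm_real, Real.norm_eq_abs]
      ring
    rw [hnorm, mul_left_comm]
    gcongr
    simpa only [hδ_rate] using norm_mul_cexp_I_mul_mul_ofReal_le (hbd m) (him_ball w hw)
  · refine .of_forall fun m w _ => ?_
    have h : HasDerivAt (fun w : ℂ => I * w * m) (I * m) w := by
      simpa using ((hasDerivAt_id w).const_mul I).mul_const (m : ℂ)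
    exact (h.cexp.const_mul (f m)).congr_deriv (by ring)

theorem stmt_6_general (f : ℝ → ℂ) (hf : Continuous f) (C β : ℝ)
    (hbd : ∀ x : ℝ, ‖f x‖ ≤ C * Real.exp (-β * |x|))
    (z : ℂ) (hz : |z.im| < β) :
    HasDerivAt
      (fun w : ℂ => (Real.sqrt (2 * Real.pi) : ℂ)⁻¹ *
        ∫ m : ℝ, f m * Complex.exp (Complex.I * w * m))
      ((Real.sqrt (2 * Real.pi) : ℂ)⁻¹ *
        ∫ m : ℝ, (Complex.I * m * f m) * Complex.exp (Complex.I * z * m)) z :=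
  (hasDerivAt_integral_mul_cexp_I_mul hf.aestronglyMeasurable hbd hz).const_mul _

/-- Differentiation of the inverse Fourier transform on the strip:
`∂_z F⁻¹(f)(z) = F⁻¹(m ↦ i m f(m))(z)` for `|Im z| < β`. -/
theorem stmt_6 (f : ℝ → ℂ) (hf : Continuous f) (C β : ℝ) (hC : 0 < C) (hβ : 0 < β)
    (hbd : ∀ x : ℝ, ‖f x‖ ≤ C * Real.exp (-β * |x|))
    (z : ℂ) (hz : |z.im| < β) :
    HasDerivAt
      (fun w : ℂ => (Real.sqrt (2 * Real.pi) : ℂ)⁻¹ *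
        ∫ m : ℝ, f m * Complex.exp (Complex.I * w * m))
      ((Real.sqrt (2 * Real.pi) : ℂ)⁻¹ *
        ∫ m : ℝ, (Complex.I * m * f m) * Complex.exp (Complex.I * z * m)) z :=
  stmt_6_general f hf C β hbd z hz
end

section
/- Let β > 0, μ > 1 and f, g ∈ E_{(β,μ)}. Set ψ(m) = (2π)^{−1/2} (f ∗ g)(m). Then for all z ∈ H_β, F⁻¹(f)(z) · F⁻¹(g)(z) = F⁻¹(ψ)(z). -/
/-!
On the strip, `m ↦ exp (i z m)` is a character of `(ℝ, +)`, so multiplying by it commutes with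
convolution: `(f ⋆ g) · e = (f · e) ⋆ (g · e)`. The weighted bound makes `f · e` and `g · e`
integrable, because `|exp (i z m)| = exp (-(Im z) m) ≤ exp (β |m|)` is absorbed by the
exponential weight and `(1 + |m|)^(-μ)` is integrable for `μ > 1`. Fubini for convolutions
(`∫ f ⋆ g = ∫ f · ∫ g`) then gives the product formula.
-/

open MeasureTheory

theorem integral_convolution_mul_of_map_add_eq_mul {f g e : ℝ → ℂ}
    (he : ∀ s t, e (s + t) = e s * e t)
    (hf : Integrable fun m => f m * e m) (hg : Integrable fun m => g m * e m) :
    ∫ m, (∫ y, f (m - y) * g y) * e m = (∫ m, f m * e m) * ∫ m, g m * e m := by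
  have hmul := integral_convolution (ContinuousLinearMap.mul ℂ ℂ) hf hg
  rw [ContinuousLinearMap.mul_apply'] at hmul
  rw [← hmul]
  refine integral_congr_ae (Filter.Eventually.of_forall fun m => ?_)
  simp only [convolution_mul_swap, ← integral_mul_const]
  refine integral_congr_ae (Filter.Eventually.of_forall fun y => ?_)
  simp only
  rw [← sub_add_cancel m y, he, sub_add_cancel]
  ring

theorem norm_cexp_I_mul_ofReal_le (z : ℂ) (x : ℝ) :
    ‖Complex.exp (Complex.I * z * x)‖ ≤ Real.exp (|z.im| * |x|) := by
  rw [Complex.norm_exp, ← abs_mul]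
  refine Real.exp_le_exp.2 ?_
  have hre : (Complex.I * z * x).re = -(z.im * x) := by
    simp [Complex.mul_re, Complex.mul_im]
  exact hre ▸ neg_le_abs _

theorem integrable_mul_cexp_of_weighted_bound {β μ C : ℝ} (hμ : 1 < μ) {h : ℝ → ℂ}
    (hh : AEStronglyMeasurable h)
    (hb : ∀ x : ℝ, (1 + |x|) ^ μ * Real.exp (β * |x|) * ‖h x‖ ≤ C)
    {z : ℂ} (hz : |z.im| ≤ β) :
    Integrable fun m : ℝ => h m * Complex.exp (Complex.I * z * m) := by
  refine ((integrable_one_add_norm (E := ℝ) (by simpa using hμ)).const_mul C).mono'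
    (hh.mul (by fun_prop : Continuous _).aestronglyMeasurable)
    (Filter.Eventually.of_forall fun x => ?_)
  have hweight : 0 < (1 + |x|) ^ μ := by positivity
  have hexp : ‖Complex.exp (Complex.I * z * x)‖ ≤ Real.exp (β * |x|) :=
    (norm_cexp_I_mul_ofReal_le z x).trans
      (Real.exp_le_exp.2 (mul_le_mul_of_nonneg_right hz (abs_nonneg x)))
  calc ‖h x * Complex.exp (Complex.I * z * x)‖
      ≤ ‖h x‖ * Real.exp (β * |x|) := by
        rw [norm_mul]; exact mul_le_mul_of_nonneg_left hexp (norm_nonneg _)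
    _ ≤ C / (1 + |x|) ^ μ := by
        rw [le_div_iff₀ hweight]; linarith [hb x]
    _ = C * (1 + ‖x‖) ^ (-μ) := by
        rw [Real.norm_eq_abs, Real.rpow_neg (by positivity), div_eq_mul_inv]

theorem stmt_7_general (β μ : ℝ) (hμ : 1 < μ) (f g : ℝ → ℂ)
    (hf : Continuous f) (hg : Continuous g) (Cf Cg : ℝ)
    (hfb : ∀ x : ℝ, (1 + |x|) ^ μ * Real.exp (β * |x|) * ‖f x‖ ≤ Cf)
    (hgb : ∀ x : ℝ, (1 + |x|) ^ μ * Real.exp (β * |x|) * ‖g x‖ ≤ Cg)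
    (z : ℂ) (hz : |z.im| < β) :
    ((Real.sqrt (2 * Real.pi) : ℂ)⁻¹ *
        ∫ m : ℝ, f m * Complex.exp (Complex.I * z * m)) *
    ((Real.sqrt (2 * Real.pi) : ℂ)⁻¹ *
        ∫ m : ℝ, g m * Complex.exp (Complex.I * z * m))
    = (Real.sqrt (2 * Real.pi) : ℂ)⁻¹ *
        ∫ m : ℝ, ((Real.sqrt (2 * Real.pi) : ℂ)⁻¹ * ∫ y : ℝ, f (m - y) * g y)
          * Complex.exp (Complex.I * z * m) := by
  have hchar : ∀ s t : ℝ, Complex.exp (Complex.I * z * ↑(s + t))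
      = Complex.exp (Complex.I * z * s) * Complex.exp (Complex.I * z * t) := fun s t => by
    rw [← Complex.exp_add]; push_cast; ring_nf
  have hconv := integral_convolution_mul_of_map_add_eq_mul hchar
    (integrable_mul_cexp_of_weighted_bound hμ hf.aestronglyMeasurable hfb hz.le)
    (integrable_mul_cexp_of_weighted_bound hμ hg.aestronglyMeasurable hgb hz.le)
  simp only [mul_assoc (Real.sqrt (2 * Real.pi) : ℂ)⁻¹, integral_const_mul]
  rw [hconv]
  ring

/-- Product formula for inverse Fourier transforms on the strip `H_β`:
`F⁻¹(f)(z) F⁻¹(g)(z) = F⁻¹(ψ)(z)` where `ψ = (2π)^{-1/2} f ∗ g`. -/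
theorem stmt_7 (β μ : ℝ) (hβ : 0 < β) (hμ : 1 < μ) (f g : ℝ → ℂ)
    (hf : Continuous f) (hg : Continuous g) (Cf Cg : ℝ)
    (hfb : ∀ x : ℝ, (1 + |x|) ^ μ * Real.exp (β * |x|) * ‖f x‖ ≤ Cf)
    (hgb : ∀ x : ℝ, (1 + |x|) ^ μ * Real.exp (β * |x|) * ‖g x‖ ≤ Cg)
    (z : ℂ) (hz : |z.im| < β) :
    ((Real.sqrt (2 * Real.pi) : ℂ)⁻¹ *
        ∫ m : ℝ, f m * Complex.exp (Complex.I * z * m)) *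
    ((Real.sqrt (2 * Real.pi) : ℂ)⁻¹ *
        ∫ m : ℝ, g m * Complex.exp (Complex.I * z * m))
    = (Real.sqrt (2 * Real.pi) : ℂ)⁻¹ *
        ∫ m : ℝ, ((Real.sqrt (2 * Real.pi) : ℂ)⁻¹ * ∫ y : ℝ, f (m - y) * g y)
          * Complex.exp (Complex.I * z * m) :=
  stmt_7_general β μ hμ f g hf hg Cf Cg hfb hgb z hz
end

section
/- Let γ₁ ≥ 0, γ₂ ≥ 1 be integers, γ₃ ∈ ℝ, and R ∈ ℂ[X] with R(im) ≠ 0 for all m ∈ ℝ. Let B ∈ E_{(β,μ)} and let a_{γ₁,κ}(τ,m) be continuous on (closure(D(0,ρ)) ∪ S_d) × ℝ, holomorphic in τ, with |a_{γ₁,κ}(τ,m)| ≤ 1/((1+|τ|^κ)^{γ₁} |R(im)|). Then ε^{−γ₃} τ^{γ₂} B(m) a_{γ₁,κ}(τ,m) lies in F^d_{(ν,β,μ,χ,κ,ε)} and there exists C₁ > 0 depending only on ν, κ, γ₂ with ‖ε^{−γ₃} τ^{γ₂} B(m) a_{γ₁,κ}(τ,m)‖_{(ν,β,μ,χ,κ,ε)}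 ≤ C₁ (‖B‖_{(β,μ)} / inf_{m∈ℝ}|R(im)|) |ε|^{χγ₂ − γ₃} for all ε ∈ E. -/
/-!
Writing `t = |τ/ε^χ|`, we have `|τ|^{γ₂} = t^{γ₂} |ε|^{χγ₂}`, so the weighted norm factors as
`(weighted norm of B) · |a| · |ε|^{χγ₂-γ₃} · t^{γ₂-1}(1+t^{2κ}) e^{-νt^κ}`. The bound on `a` gives
`|a| ≤ 1/inf|R(im)|`, and the last factor is bounded uniformly in `t ≥ 0`: since `t - 1 ≤ t^κ`, it
is at most `e^ν` times a sum of terms `t^N e^{-νt} ≤ N!/ν^N`.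
-/

open Real Nat

lemma Real.pow_mul_exp_neg_mul_le {ν t : ℝ} (hν : 0 < ν) (ht : 0 ≤ t) (N : ℕ) :
    t ^ N * exp (-ν * t) ≤ N ! / ν ^ N := by
  have hexp : (ν * t) ^ N / N ! ≤ exp (ν * t) := pow_div_factorial_le_exp (ν * t) (by positivity) N
  rw [neg_mul, exp_neg, ← div_eq_mul_inv, div_le_div_iff₀ (exp_pos _) (by positivity)]
  rw [mul_pow, div_le_iff₀ (by positivity)] at hexp
  linarith

lemma Real.exp_neg_mul_pow_le {ν t : ℝ} (hν : 0 ≤ ν) (ht : 0 ≤ t) {κ : ℕ} (hκ : 1 ≤ κ) :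
    exp (-ν * t ^ κ) ≤ exp ν * exp (-ν * t) := by
  have h : t - 1 ≤ t ^ κ := by
    rcases le_or_gt t 1 with h | h
    · linarith [pow_nonneg ht κ]
    · linarith [le_self_pow₀ h.le (by omega : κ ≠ 0)]
  rw [← exp_add, exp_le_exp]
  nlinarith

lemma Real.pow_mul_exp_neg_mul_pow_le {ν t : ℝ} (hν : 0 < ν) (ht : 0 ≤ t) {κ : ℕ} (hκ : 1 ≤ κ)
    (N : ℕ) : t ^ N * exp (-ν * t ^ κ) ≤ exp ν * (N ! / ν ^ N) :=
  calc t ^ N * exp (-ν * t ^ κ) ≤ t ^ N * (exp ν * exp (-ν * t)) := by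
        gcongr; exact exp_neg_mul_pow_le hν.le ht hκ
    _ = exp ν * (t ^ N * exp (-ν * t)) := by ring
    _ ≤ exp ν * (N ! / ν ^ N) := by gcongr; exact pow_mul_exp_neg_mul_le hν ht N

lemma one_add_pow_div_mul_pow_succ_mul_exp_le {ν t : ℝ} (hν : 0 < ν) (ht : 0 ≤ t) {κ : ℕ}
    (hκ : 1 ≤ κ) (n : ℕ) :
    (1 + t ^ (2 * κ)) / t * t ^ (n + 1) * exp (-ν * t ^ κ) ≤
      exp ν * (n ! / ν ^ n + (n + 2 * κ)! / ν ^ (n + 2 * κ)) := by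
  rcases ht.eq_or_lt with rfl | ht
  · simp only [div_zero, zero_mul]
    positivity
  have hsplit : (1 + t ^ (2 * κ)) / t * t ^ (n + 1) * exp (-ν * t ^ κ) =
      t ^ n * exp (-ν * t ^ κ) + t ^ (n + 2 * κ) * exp (-ν * t ^ κ) := by
    field_simp
    ring
  rw [hsplit, mul_add]
  exact add_le_add (pow_mul_exp_neg_mul_pow_le hν ht.le hκ _)
    (pow_mul_exp_neg_mul_pow_le hν ht.le hκ _)

lemma Complex.norm_eq_norm_div_cpow_mul {ε : ℂ} (hε : ε ≠ 0) (τ : ℂ) (χ : ℝ) :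
    ‖τ‖ = ‖τ / ε ^ (χ : ℂ)‖ * ‖ε‖ ^ χ := by
  have hεχ : ε ^ (χ : ℂ) ≠ 0 := by simp [Complex.cpow_eq_zero_iff, hε]
  rw [← norm_cpow_real, ← norm_mul, div_mul_cancel₀ τ hεχ]

/-- Norm estimate in `F^d_{(ν,β,μ,χ,κ,ε)}`: for `B ∈ E_{(β,μ)}` and
`|a_{γ₁,κ}(τ,m)| ≤ 1/((1+|τ|^κ)^{γ₁}|R(im)|)`, there is `C₁ > 0` depending only on
`ν, κ, γ₂` such that the weighted norm of `ε^{-γ₃} τ^{γ₂} B(m) a_{γ₁,κ}(τ,m)` is at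
most `C₁ (‖B‖_{(β,μ)}/inf_m |R(im)|) |ε|^{χγ₂-γ₃}`. -/
theorem stmt_11 (ν χ : ℝ) (hν : 0 < ν) (κ : ℕ) (hκ : 1 ≤ κ) (γ₂ : ℕ) (hγ₂ : 1 ≤ γ₂) :
    ∃ C₁ : ℝ, 0 < C₁ ∧
      ∀ (ρ β μ : ℝ), 0 < ρ → 0 < β → 1 < μ →
      ∀ (d η : ℝ), 0 < η →
      ∀ (γ₁ : ℕ) (γ₃ : ℝ) (R : Polynomial ℂ),
        (∀ x : ℝ, R.eval (Complex.I * x) ≠ 0) →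
      ∀ rinf : ℝ, 0 < rinf → (∀ x : ℝ, rinf ≤ ‖R.eval (Complex.I * x)‖) →
      ∀ (B : ℝ → ℂ) (CB : ℝ),
        (∀ x : ℝ, (1 + |x|) ^ μ * Real.exp (β * |x|) * ‖B x‖ ≤ CB) →
      ∀ a : ℂ → ℝ → ℂ,
        (∀ τ : ℂ, (τ ∈ closure (Metric.ball (0 : ℂ) ρ) ∨
            (τ ≠ 0 ∧ |Complex.arg τ - d| < η)) →
          ∀ x : ℝ, ‖a τ x‖ ≤ 1 / ((1 + ‖τ‖ ^ κ) ^ γ₁ * ‖R.eval (Complex.I * x)‖)) →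
      ∀ ε : ℂ, ε ≠ 0 →
      ∀ τ : ℂ, (τ ∈ closure (Metric.ball (0 : ℂ) ρ) ∨
          (τ ≠ 0 ∧ |Complex.arg τ - d| < η)) →
      ∀ x : ℝ,
        (1 + |x|) ^ μ * Real.exp (β * |x|) *
          ((1 + ‖τ / ε ^ (χ : ℂ)‖ ^ (2 * κ)) / ‖τ / ε ^ (χ : ℂ)‖) *
          Real.exp (-ν * ‖τ / ε ^ (χ : ℂ)‖ ^ κ) *
          ‖ε ^ (-(γ₃ : ℂ)) * τ ^ γ₂ * B x * a τ x‖
        ≤ C₁ * (CB / rinf) * ‖ε‖ ^ (χ * γ₂ - γ₃) := by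
  obtain ⟨n, rfl⟩ := Nat.exists_eq_add_of_le' hγ₂
  refine ⟨exp ν * (n ! / ν ^ n + (n + 2 * κ)! / ν ^ (n + 2 * κ)), by positivity, ?_⟩
  intro ρ β μ _ _ _ d η _ γ₁ γ₃ R _ rinf hrinf hR B CB hB a ha ε hε τ hτ x
  set t := ‖τ / ε ^ (χ : ℂ)‖
  have hτ_norm : ‖τ‖ = t * ‖ε‖ ^ χ := Complex.norm_eq_norm_div_cpow_mul hε τ χ
  have ha_le : ‖a τ x‖ ≤ 1 / rinf := by
    refine (ha τ hτ x).trans (one_div_le_one_div_of_le hrinf ?_)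
    exact (hR x).trans (le_mul_of_one_le_left (norm_nonneg _) (one_le_pow₀ (by simp)))
  have hε_pow : ‖ε‖ ^ (-γ₃) * (‖ε‖ ^ χ) ^ (n + 1) = ‖ε‖ ^ (χ * ↑(n + 1) - γ₃) := by
    rw [← rpow_mul_natCast (norm_nonneg ε), ← rpow_add (norm_pos_iff.2 hε)]
    ring_nf
  have hCB : 0 ≤ CB := le_trans (by positivity) (hB 0)
  calc _ = ((1 + |x|) ^ μ * exp (β * |x|) * ‖B x‖) * ‖a τ x‖ *
        (‖ε‖ ^ (-γ₃) * (‖ε‖ ^ χ) ^ (n + 1)) *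
        ((1 + t ^ (2 * κ)) / t * t ^ (n + 1) * exp (-ν * t ^ κ)) := by
        rw [norm_mul, norm_mul, norm_mul, norm_pow, hτ_norm, ← Complex.ofReal_neg,
          Complex.norm_cpow_real]
        ring
    _ ≤ CB * (1 / rinf) * ‖ε‖ ^ (χ * ↑(n + 1) - γ₃) *
        (exp ν * (n ! / ν ^ n + (n + 2 * κ)! / ν ^ (n + 2 * κ))) := by
        rw [hε_pow]
        gcongr ?_ * ?_ * _ * ?_
        · exact hB x
        · exact one_add_pow_div_mul_pow_succ_mul_exp_le hν (norm_nonneg _) hκ n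
    _ = _ := by ring
end

section
/- Let γ₁, γ₂, γ₃ ≥ 0 be real numbers with γ₁ ≤ γ₂ + γ₃ + 1 and γ₁ ≥ γ₃. Then there exists B₂ > 0 (depending on γ₁, γ₂, γ₃, ν) such that for all f ∈ E^d_{(ν,β,μ,Γ,ε)}, ‖τ^{−γ₁} ∫₀^τ (τ−s)^{γ₂} s^{γ₃} f(s,m) ds‖_{(ν,β,μ,Γ,ε)} ≤ B₂ ‖f‖_{(ν,β,μ,Γ,ε)} |ε|^{Γ(γ₂+γ₃+1) − Γγ₁}. -/
open MeasureTheory Set Filter Real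

/-!
Substituting `s = uτ` and writing `T = |τ| / |ε|^Γ`, `a = γ₂ + γ₃ + 1 - γ₁ ∈ [0, γ₂ + 1]`, the
bound on `f` turns the weighted norm of the operator into at most `Cf |ε|^{Γ a}` times
`T^a (1 + T²) e^{-νT} ∫₀¹ (1-u)^{γ₂} u^{γ₃} e^{νuT} / (1 + u²T²) du`, so it suffices to bound this
uniformly in `T > 0`. For `u ≤ 1/2` the integrand, multiplied by `(1 + T²) e^{-νT}`, is at most
`(1 + T²) e^{-νT/2}`, and `T^a (1 + T²) e^{-νT/2}` is bounded. For `u ≥ 1/2` the quotient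
`(1 + T²) / (1 + u²T²)` is at most `4`, leaving `T^a ∫₀¹ v^{γ₂} e^{-νTv} dv`; as
`T^a ≤ 1 + T^{γ₂+1}`, this is at most `1 + Γ(γ₂ + 1) / ν^{γ₂+1}` by comparison with the Gamma
integral.
-/

theorem exists_rpow_mul_exp_neg_mul_le {b c : ℝ} (hb : 0 ≤ b) (hc : 0 < c) :
    ∃ C, ∀ T, 0 ≤ T → T ^ b * exp (-c * T) ≤ C := by
  have hcont : Continuous fun T : ℝ => T ^ b * exp (-c * T) := by
    have := continuous_rpow_const hb
    fun_prop
  obtain ⟨R, hR⟩ := eventually_atTop.1 <|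
    (tendsto_rpow_mul_exp_neg_mul_atTop_nhds_zero b c hc).eventually (Iic_mem_nhds one_pos)
  obtain ⟨M, hM⟩ := (isCompact_Icc (a := 0) (b := R)).exists_bound_of_continuousOn
    hcont.continuousOn
  refine ⟨max 1 M, fun T hT => ?_⟩
  rcases le_total T R with hTR | hRT
  · exact (le_abs_self _).trans ((hM T ⟨hT, hTR⟩).trans (le_max_right _ _))
  · exact (hR T hRT).trans (le_max_left _ _)

theorem rpow_le_one_add_rpow {T a b : ℝ} (hT : 0 ≤ T) (ha : 0 ≤ a) (hab : a ≤ b) :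
    T ^ a ≤ 1 + T ^ b := by
  rcases le_total T 1 with hT1 | hT1
  · linarith [rpow_le_one hT hT1 ha, rpow_nonneg hT b]
  · linarith [rpow_le_rpow_of_exponent_le hT1 hab]

theorem exists_rpow_mul_one_add_sq_mul_exp_neg_mul_le {b c : ℝ} (hb : 0 ≤ b) (hc : 0 < c) :
    ∃ C, ∀ T, 0 ≤ T → T ^ b * ((1 + T ^ 2) * exp (-c * T)) ≤ C := by
  obtain ⟨C₀, hC₀⟩ := exists_rpow_mul_exp_neg_mul_le hb hc
  obtain ⟨C₂, hC₂⟩ := exists_rpow_mul_exp_neg_mul_le (b := b + 2) (by linarith) hc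
  refine ⟨C₀ + C₂, fun T hT => ?_⟩
  have hsplit : T ^ b * ((1 + T ^ 2) * exp (-c * T)) =
      T ^ b * exp (-c * T) + T ^ (b + 2) * exp (-c * T) := by
    rw [show b + 2 = b + ((2 : ℕ) : ℝ) by norm_num,
      rpow_add_natCast' hT (by positivity : 0 < b + ((2 : ℕ) : ℝ)).ne']
    ring
  linarith [hC₀ T hT, hC₂ T hT]

theorem setIntegral_Ioo_zero_one_comp_one_sub (g : ℝ → ℝ) :
    ∫ u in Ioo (0 : ℝ) 1, g (1 - u) = ∫ u in Ioo (0 : ℝ) 1, g u := by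
  simp only [← integral_Ioc_eq_integral_Ioo, ← intervalIntegral.integral_of_le zero_le_one,
    intervalIntegral.integral_comp_sub_left, sub_self, sub_zero]
theorem setIntegral_Ioo_rpow_mul_exp_neg_mul_le_one {γ r : ℝ} (hγ : 0 ≤ γ) (hr : 0 ≤ r) :
    ∫ v in Ioo (0 : ℝ) 1, v ^ γ * exp (-(r * v)) ≤ 1 := by
  have h := norm_setIntegral_le_of_norm_le_const (μ := volume) (s := Ioo (0 : ℝ) 1)
    (f := fun v => v ^ γ * exp (-(r * v))) (C := 1) (by simp) fun v hv => by
      have hv0 : 0 ≤ v := hv.1.le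
      rw [norm_of_nonneg (by positivity)]
      exact mul_le_one₀ (rpow_le_one hv0 hv.2.le hγ) (exp_pos _).le
        (exp_le_one_iff.2 (by nlinarith))
  simpa using (le_abs_self _).trans h

theorem rpow_mul_setIntegral_Ioo_rpow_mul_exp_neg_mul_le {γ ν T : ℝ} (hγ : 0 ≤ γ) (hν : 0 < ν)
    (hT : 0 < T) :
    T ^ (γ + 1) * ∫ v in Ioo (0 : ℝ) 1, v ^ γ * exp (-(ν * T * v)) ≤
      Gamma (γ + 1) / ν ^ (γ + 1) := by
  have hνT : 0 < ν * T := mul_pos hν hT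
  have hint : IntegrableOn (fun v : ℝ => v ^ γ * exp (-(ν * T * v))) (Ioi 0) := by
    simpa [rpow_one] using
      integrableOn_rpow_mul_exp_neg_mul_rpow (by linarith : -1 < γ) zero_lt_one hνT
  have hGamma := integral_rpow_mul_exp_neg_mul_Ioi (a := γ + 1) (by linarith) hνT
  rw [add_sub_cancel_right] at hGamma
  have hnonneg : 0 ≤ᵐ[volume.restrict (Ioi 0)] fun v : ℝ => v ^ γ * exp (-(ν * T * v)) := by
    filter_upwards [ae_restrict_mem measurableSet_Ioi] with v (hv : 0 < v)
    positivity
  calc T ^ (γ + 1) * ∫ v in Ioo (0 : ℝ) 1, v ^ γ * exp (-(ν * T * v))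
      ≤ T ^ (γ + 1) * ∫ v in Ioi (0 : ℝ), v ^ γ * exp (-(ν * T * v)) := by
        gcongr _ * ?_
        exact setIntegral_mono_set hint hnonneg Ioo_subset_Ioi_self.eventuallyLE
    _ = Gamma (γ + 1) / ν ^ (γ + 1) := by
        rw [hGamma, one_div, inv_rpow hνT.le, mul_rpow hν.le hT.le]
        field_simp

theorem rpow_mul_setIntegral_one_sub_rpow_mul_exp_neg_le {γ ν T a : ℝ} (hγ : 0 ≤ γ)
    (hν : 0 < ν) (hT : 0 < T) (ha : 0 ≤ a) (haγ : a ≤ γ + 1) :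
    T ^ a * ∫ u in Ioo (0 : ℝ) 1, (1 - u) ^ γ * exp (-(ν * T * (1 - u))) ≤
      1 + Gamma (γ + 1) / ν ^ (γ + 1) := by
  rw [setIntegral_Ioo_zero_one_comp_one_sub fun v => v ^ γ * exp (-(ν * T * v))]
  have hI : 0 ≤ ∫ v in Ioo (0 : ℝ) 1, v ^ γ * exp (-(ν * T * v)) :=
    setIntegral_nonneg measurableSet_Ioo fun v hv => by have := hv.1; positivity
  calc T ^ a * ∫ v in Ioo (0 : ℝ) 1, v ^ γ * exp (-(ν * T * v))
      ≤ (1 + T ^ (γ + 1)) * ∫ v in Ioo (0 : ℝ) 1, v ^ γ * exp (-(ν * T * v)) := by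
        gcongr
        exact rpow_le_one_add_rpow hT.le ha haγ
    _ = (∫ v in Ioo (0 : ℝ) 1, v ^ γ * exp (-(ν * T * v))) +
          T ^ (γ + 1) * ∫ v in Ioo (0 : ℝ) 1, v ^ γ * exp (-(ν * T * v)) := by ring
    _ ≤ 1 + Gamma (γ + 1) / ν ^ (γ + 1) :=
        add_le_add (setIntegral_Ioo_rpow_mul_exp_neg_mul_le_one hγ (by positivity))
          (rpow_mul_setIntegral_Ioo_rpow_mul_exp_neg_mul_le hγ hν hT)

noncomputable def expWeight (ν T : ℝ) : ℝ := (1 + T ^ 2) * exp (-ν * T)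

theorem expWeight_pos (ν T : ℝ) : 0 < expWeight ν T := by
  unfold expWeight; positivity

theorem continuous_expWeight (ν : ℝ) : Continuous (expWeight ν) := by
  unfold expWeight; fun_prop

theorem expWeight_div_expWeight_mul_le {ν T u : ℝ} (hν : 0 ≤ ν) (hT : 0 ≤ T) (hu : 0 ≤ u) :
    expWeight ν T / expWeight ν (u * T) ≤
      (1 + T ^ 2) * exp (-(ν / 2) * T) + 4 * exp (-(ν * T * (1 - u))) := by
  have hratio : expWeight ν T / expWeight ν (u * T) =
      (1 + T ^ 2) / (1 + (u * T) ^ 2) * exp (-(ν * T * (1 - u))) := by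
    rw [expWeight, expWeight, mul_div_mul_comm, ← exp_sub]
    ring_nf
  have hνT : 0 ≤ ν * T := mul_nonneg hν hT
  rw [hratio]
  rcases le_total u (1 / 2) with hu' | hu'
  · have hfrac : (1 + T ^ 2) / (1 + (u * T) ^ 2) ≤ 1 + T ^ 2 :=
      div_le_self (by positivity) (by nlinarith [sq_nonneg (u * T)])
    have hexp : exp (-(ν * T * (1 - u))) ≤ exp (-(ν / 2) * T) := exp_le_exp.2 (by nlinarith)
    calc (1 + T ^ 2) / (1 + (u * T) ^ 2) * exp (-(ν * T * (1 - u)))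
        ≤ (1 + T ^ 2) * exp (-(ν / 2) * T) := by gcongr
      _ ≤ _ := le_add_of_nonneg_right (by positivity)
  · have hfrac : (1 + T ^ 2) / (1 + (u * T) ^ 2) ≤ 4 := by
      rw [div_le_iff₀ (by positivity)]
      nlinarith [mul_nonneg (by nlinarith : (0 : ℝ) ≤ 4 * u ^ 2 - 1) (sq_nonneg T)]
    calc (1 + T ^ 2) / (1 + (u * T) ^ 2) * exp (-(ν * T * (1 - u)))
        ≤ 4 * exp (-(ν * T * (1 - u))) := by gcongr
      _ ≤ _ := le_add_of_nonneg_left (by positivity)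

theorem integrableOn_one_sub_rpow_mul_rpow_div_expWeight {γ₂ γ₃ : ℝ} (hγ₂ : 0 ≤ γ₂)
    (hγ₃ : 0 ≤ γ₃) (ν T : ℝ) :
    IntegrableOn (fun u => (1 - u) ^ γ₂ * u ^ γ₃ / expWeight ν (u * T)) (Ioo 0 1) := by
  refine (Continuous.integrableOn_Icc ?_).mono_set Ioo_subset_Icc_self
  exact (((continuous_rpow_const hγ₂).comp (continuous_const.sub continuous_id)).mul
    (continuous_rpow_const hγ₃)).div ((continuous_expWeight ν).comp (by fun_prop))
    fun u => (expWeight_pos _ _).ne'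

theorem exists_rpow_mul_expWeight_mul_setIntegral_le {γ₂ γ₃ ν a : ℝ} (hγ₂ : 0 ≤ γ₂)
    (hγ₃ : 0 ≤ γ₃) (hν : 0 < ν) (ha : 0 ≤ a) (haγ : a ≤ γ₂ + 1) :
    ∃ K, ∀ T, 0 < T →
      T ^ a * expWeight ν T * ∫ u in Ioo (0 : ℝ) 1, (1 - u) ^ γ₂ * u ^ γ₃ / expWeight ν (u * T)
        ≤ K := by
  obtain ⟨C, hC⟩ := exists_rpow_mul_one_add_sq_mul_exp_neg_mul_le ha (half_pos hν)
  refine ⟨C + 4 * (1 + Gamma (γ₂ + 1) / ν ^ (γ₂ + 1)), fun T hT => ?_⟩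
  set M := (1 + T ^ 2) * exp (-(ν / 2) * T)
  have hint_M : IntegrableOn (fun _ => M) (Ioo (0 : ℝ) 1) := integrableOn_const (by simp)
  have hint_kernel :=
    (integrableOn_one_sub_rpow_mul_rpow_div_expWeight hγ₂ hγ₃ ν T).mul_const (expWeight ν T)
  have hint_tail : IntegrableOn (fun u => (1 - u) ^ γ₂ * exp (-(ν * T * (1 - u)))) (Ioo 0 1) :=
    (Continuous.integrableOn_Icc (by fun_prop)).mono_set Ioo_subset_Icc_self
  have hpointwise : ∀ u ∈ Ioo (0 : ℝ) 1,
      (1 - u) ^ γ₂ * u ^ γ₃ / expWeight ν (u * T) * expWeight ν T ≤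
        M + 4 * ((1 - u) ^ γ₂ * exp (-(ν * T * (1 - u)))) := by
    rintro u ⟨hu₀, hu₁⟩
    have h₂ : (1 - u) ^ γ₂ ≤ 1 := rpow_le_one (by linarith) (by linarith) hγ₂
    have h₃ : u ^ γ₃ ≤ 1 := rpow_le_one hu₀.le hu₁.le hγ₃
    have hM : 0 ≤ M := by positivity
    calc (1 - u) ^ γ₂ * u ^ γ₃ / expWeight ν (u * T) * expWeight ν T
        = (1 - u) ^ γ₂ * u ^ γ₃ * (expWeight ν T / expWeight ν (u * T)) := by ring
      _ ≤ (1 - u) ^ γ₂ * 1 * (M + 4 * exp (-(ν * T * (1 - u)))) := by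
        refine mul_le_mul (by gcongr) (expWeight_div_expWeight_mul_le hν.le hT.le hu₀.le)
          (div_nonneg (expWeight_pos _ _).le (expWeight_pos _ _).le) (by positivity)
      _ ≤ M + 4 * ((1 - u) ^ γ₂ * exp (-(ν * T * (1 - u)))) := by
        nlinarith
  calc T ^ a * expWeight ν T * ∫ u in Ioo (0 : ℝ) 1, (1 - u) ^ γ₂ * u ^ γ₃ / expWeight ν (u * T)
      = T ^ a * ∫ u in Ioo (0 : ℝ) 1,
          (1 - u) ^ γ₂ * u ^ γ₃ / expWeight ν (u * T) * expWeight ν T := by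
        rw [integral_mul_const]; ring
    _ ≤ T ^ a * ∫ u in Ioo (0 : ℝ) 1, (M + 4 * ((1 - u) ^ γ₂ * exp (-(ν * T * (1 - u))))) := by
        gcongr _ * ?_
        exact setIntegral_mono_on hint_kernel (hint_M.add (hint_tail.const_mul 4))
          measurableSet_Ioo hpointwise
    _ = T ^ a * M + 4 * (T ^ a * ∫ u in Ioo (0 : ℝ) 1,
          (1 - u) ^ γ₂ * exp (-(ν * T * (1 - u)))) := by
        rw [integral_add hint_M (hint_tail.const_mul 4),
          setIntegral_const, integral_const_mul, Real.volume_real_Ioo_of_le zero_le_one,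
          sub_zero, one_smul]
        ring
    _ ≤ C + 4 * (1 + Gamma (γ₂ + 1) / ν ^ (γ₂ + 1)) := by
        gcongr
        · exact hC T hT.le
        · exact rpow_mul_setIntegral_one_sub_rpow_mul_exp_neg_le hγ₂ hν hT ha haγ

theorem norm_ofReal_mul_cpow_ofReal {r : ℝ} (hr : 0 ≤ r) (τ : ℂ) (γ : ℝ) :
    ‖((r : ℂ) * τ) ^ (γ : ℂ)‖ = r ^ γ * ‖τ‖ ^ γ := by
  rw [Complex.norm_cpow_real, norm_mul, Complex.norm_real, norm_of_nonneg hr,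
    mul_rpow hr (norm_nonneg τ)]

theorem ofReal_mul_mem_disc_or_sector {ρ d η u : ℝ} {τ : ℂ} (hu₀ : 0 < u) (hu₁ : u ≤ 1)
    (hτ : τ ∈ closure (Metric.ball 0 ρ) ∨ (τ ≠ 0 ∧ |Complex.arg τ - d| < η)) :
    (u : ℂ) * τ ∈ closure (Metric.ball 0 ρ) ∨
      ((u : ℂ) * τ ≠ 0 ∧ |Complex.arg ((u : ℂ) * τ) - d| < η) := by
  rcases hτ with hdisc | ⟨hτ₀, harg⟩
  · refine Or.inl (map_mem_closure (continuous_const.mul continuous_id) hdisc fun z hz => ?_)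
    rw [mem_ball_zero_iff] at hz ⊢
    rw [norm_mul, Complex.norm_real, norm_of_nonneg hu₀.le]
    nlinarith [norm_nonneg z]
  · exact Or.inr ⟨mul_ne_zero (Complex.ofReal_ne_zero.2 hu₀.ne') hτ₀,
      by rwa [Complex.arg_real_mul τ hu₀]⟩

theorem norm_setIntegral_volterra_le {γ₂ γ₃ ν T M : ℝ} (hγ₂ : 0 ≤ γ₂) (hγ₃ : 0 ≤ γ₃)
    {τ : ℂ} {g : ℂ → ℂ} (hg : ∀ u ∈ Ioo (0 : ℝ) 1, ‖g (u * τ)‖ ≤ M / expWeight ν (u * T)) :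
    ‖∫ u in Ioo (0 : ℝ) 1, (τ - u * τ) ^ (γ₂ : ℂ) * (u * τ) ^ (γ₃ : ℂ) * g (u * τ)‖ ≤
      M * ‖τ‖ ^ (γ₂ + γ₃) * ∫ u in Ioo (0 : ℝ) 1, (1 - u) ^ γ₂ * u ^ γ₃ / expWeight ν (u * T) := by
  rw [← integral_const_mul]
  refine norm_integral_le_of_norm_le
    ((integrableOn_one_sub_rpow_mul_rpow_div_expWeight hγ₂ hγ₃ ν T).const_mul _) ?_
  filter_upwards [ae_restrict_mem measurableSet_Ioo] with u ⟨hu₀, hu₁⟩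
  have hsub : τ - u * τ = ((1 - u : ℝ) : ℂ) * τ := by push_cast; ring
  rw [norm_mul, norm_mul, hsub, norm_ofReal_mul_cpow_ofReal (by linarith),
    norm_ofReal_mul_cpow_ofReal hu₀.le, rpow_add_of_nonneg (norm_nonneg τ) hγ₂ hγ₃]
  calc (1 - u) ^ γ₂ * ‖τ‖ ^ γ₂ * (u ^ γ₃ * ‖τ‖ ^ γ₃) * ‖g (u * τ)‖
      ≤ (1 - u) ^ γ₂ * ‖τ‖ ^ γ₂ * (u ^ γ₃ * ‖τ‖ ^ γ₃) * (M / expWeight ν (u * T)) := by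
        gcongr
        exact hg u ⟨hu₀, hu₁⟩
    _ = M * (‖τ‖ ^ γ₂ * ‖τ‖ ^ γ₃) * ((1 - u) ^ γ₂ * u ^ γ₃ / expWeight ν (u * T)) := by ring

theorem mul_expWeight_mul_norm_volterra_le {γ₁ γ₂ γ₃ ν A C E : ℝ} (hγ₂ : 0 ≤ γ₂)
    (hγ₃ : 0 ≤ γ₃) (hA : 0 < A) (hE : 0 < E) {τ : ℂ} (hτ : τ ≠ 0) {g : ℂ → ℂ}
    (hg : ∀ u ∈ Ioo (0 : ℝ) 1, A * expWeight ν (u * (‖τ‖ / E)) * ‖g (u * τ)‖ ≤ C) :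
    A * expWeight ν (‖τ‖ / E) * ‖τ ^ (-(γ₁ : ℂ)) * (τ * ∫ u in Ioo (0 : ℝ) 1,
        (τ - u * τ) ^ (γ₂ : ℂ) * (u * τ) ^ (γ₃ : ℂ) * g (u * τ))‖ ≤
      C * ((‖τ‖ / E) ^ (γ₂ + γ₃ + 1 - γ₁) * expWeight ν (‖τ‖ / E) *
        ∫ u in Ioo (0 : ℝ) 1, (1 - u) ^ γ₂ * u ^ γ₃ / expWeight ν (u * (‖τ‖ / E))) *
        E ^ (γ₂ + γ₃ + 1 - γ₁) := by
  set T := ‖τ‖ / E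
  set J := ∫ u in Ioo (0 : ℝ) 1, (1 - u) ^ γ₂ * u ^ γ₃ / expWeight ν (u * T)
  have hτ_pos : 0 < ‖τ‖ := norm_pos_iff.2 hτ
  have hg' : ∀ u ∈ Ioo (0 : ℝ) 1, ‖g (u * τ)‖ ≤ C / A / expWeight ν (u * T) := fun u hu => by
    rw [div_div, le_div_iff₀ (mul_pos hA (expWeight_pos _ _))]
    exact (le_of_eq (by ring)).trans (hg u hu)
  have hpow : ‖τ‖ ^ (-γ₁) * (‖τ‖ * ‖τ‖ ^ (γ₂ + γ₃)) =
      T ^ (γ₂ + γ₃ + 1 - γ₁) * E ^ (γ₂ + γ₃ + 1 - γ₁) := by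
    rw [← rpow_one_add' hτ_pos.le (by linarith), ← rpow_add hτ_pos,
      ← mul_rpow (div_pos hτ_pos hE).le hE.le, div_mul_cancel₀ _ hE.ne']
    ring_nf
  calc _ = A * expWeight ν T * (‖τ‖ ^ (-γ₁) * (‖τ‖ * ‖∫ u in Ioo (0 : ℝ) 1,
          (τ - u * τ) ^ (γ₂ : ℂ) * (u * τ) ^ (γ₃ : ℂ) * g (u * τ)‖)) := by
        rw [norm_mul, norm_mul, ← Complex.ofReal_neg, Complex.norm_cpow_real]
    _ ≤ A * expWeight ν T * (‖τ‖ ^ (-γ₁) * (‖τ‖ * (C / A * ‖τ‖ ^ (γ₂ + γ₃) * J))) := by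
        gcongr
        · exact mul_nonneg hA.le (expWeight_pos _ _).le
        · exact norm_setIntegral_volterra_le hγ₂ hγ₃ hg'
    _ = C * expWeight ν T * J * (‖τ‖ ^ (-γ₁) * (‖τ‖ * ‖τ‖ ^ (γ₂ + γ₃))) := by
        field_simp
    _ = C * (T ^ (γ₂ + γ₃ + 1 - γ₁) * expWeight ν T * J) * E ^ (γ₂ + γ₃ + 1 - γ₁) := by
        rw [hpow]
        ring

theorem stmt_15_general (γ₁ γ₂ γ₃ ν : ℝ) (hγ₂ : 0 ≤ γ₂) (hγ₃ : 0 ≤ γ₃)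
    (h1 : γ₁ ≤ γ₂ + γ₃ + 1) (h2 : γ₃ ≤ γ₁) (hν : 0 < ν) :
    ∃ B₂ : ℝ, 0 < B₂ ∧
      ∀ (ρ β μ Γ d η : ℝ), 0 < ρ → 0 < β → 1 < μ → 0 ≤ Γ → 0 < η →
      ∀ ε : ℂ, ε ≠ 0 →
      ∀ f : ℂ → ℝ → ℂ,
        (∀ x : ℝ, ContinuousOn (fun τ => f τ x)
          (closure (Metric.ball (0 : ℂ) ρ) ∪ {τ : ℂ | τ ≠ 0 ∧ |Complex.arg τ - d| < η})) →
      ∀ Cf : ℝ,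
        (∀ τ : ℂ, (τ ∈ closure (Metric.ball (0 : ℂ) ρ) ∨
            (τ ≠ 0 ∧ |Complex.arg τ - d| < η)) →
          ∀ x : ℝ,
            (1 + |x|) ^ μ * Real.exp (β * |x|) * (1 + ‖τ / ε ^ (Γ : ℂ)‖ ^ 2) *
              Real.exp (-ν * ‖τ / ε ^ (Γ : ℂ)‖) * ‖f τ x‖ ≤ Cf) →
      ∀ τ : ℂ, (τ ∈ closure (Metric.ball (0 : ℂ) ρ) ∨
          (τ ≠ 0 ∧ |Complex.arg τ - d| < η)) →
      ∀ x : ℝ,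
        (1 + |x|) ^ μ * Real.exp (β * |x|) * (1 + ‖τ / ε ^ (Γ : ℂ)‖ ^ 2) *
            Real.exp (-ν * ‖τ / ε ^ (Γ : ℂ)‖) *
            ‖τ ^ (-(γ₁ : ℂ)) * (τ * ∫ u in Set.Ioo (0 : ℝ) 1,
              (τ - (u : ℂ) * τ) ^ (γ₂ : ℂ) * ((u : ℂ) * τ) ^ (γ₃ : ℂ) * f ((u : ℂ) * τ) x)‖
          ≤ B₂ * Cf * ‖ε‖ ^ (Γ * (γ₂ + γ₃ + 1) - Γ * γ₁) := by
  obtain ⟨K, hK⟩ := exists_rpow_mul_expWeight_mul_setIntegral_le (a := γ₂ + γ₃ + 1 - γ₁)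
    hγ₂ hγ₃ hν (by linarith) (by linarith)
  refine ⟨max K 1, by positivity, ?_⟩
  intro ρ β μ Γ d η _ _ _ _ _ ε hε f _ Cf hC τ hτ x
  have hCf : 0 ≤ Cf := le_trans (by positivity) (hC τ hτ x)
  rcases eq_or_ne τ 0 with rfl | hτ₀
  · simp only [zero_mul, mul_zero, norm_zero]
    positivity
  have hE : 0 < ‖ε‖ ^ Γ := rpow_pos_of_pos (norm_pos_iff.2 hε) Γ
  have hnorm_div (s : ℂ) : ‖s / ε ^ (Γ : ℂ)‖ = ‖s‖ / ‖ε‖ ^ Γ := by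
    rw [norm_div, Complex.norm_cpow_real]
  have hweighted := mul_expWeight_mul_norm_volterra_le (γ₁ := γ₁) (C := Cf)
    (g := fun s => f s x) hγ₂ hγ₃ (by positivity : 0 < (1 + |x|) ^ μ * exp (β * |x|)) hE hτ₀
    fun u ⟨hu₀, hu₁⟩ => by
      have h := hC _ (ofReal_mul_mem_disc_or_sector hu₀ hu₁.le hτ) x
      rw [hnorm_div, norm_mul, Complex.norm_real, norm_of_nonneg hu₀.le, mul_div_assoc] at h
      exact (le_of_eq (by rw [expWeight]; ring)).trans h
  rw [hnorm_div, ← mul_sub, rpow_mul (norm_nonneg ε)]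
  refine (le_of_eq (by rw [expWeight]; ring)).trans (hweighted.trans ?_)
  rw [mul_comm (max K 1)]
  gcongr
  exact (hK _ (div_pos (norm_pos_iff.2 hτ₀) hE)).trans (le_max_left _ _)

/-- Norm estimate for the Volterra operator
`f ↦ τ^{-γ₁} ∫₀^τ (τ-s)^{γ₂} s^{γ₃} f(s,m) ds` on the space `E^d_{(ν,β,μ,Γ,ε)}`:
there is `B₂ > 0` (depending on `γ₁,γ₂,γ₃,ν`) with
`‖T f‖ ≤ B₂ ‖f‖ |ε|^{Γ(γ₂+γ₃+1) - Γγ₁}`. The segment integral is parametrized by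
`s = uτ`, `u ∈ (0,1)`. -/
theorem stmt_15 (γ₁ γ₂ γ₃ ν : ℝ) (hγ₁ : 0 ≤ γ₁) (hγ₂ : 0 ≤ γ₂) (hγ₃ : 0 ≤ γ₃)
    (h1 : γ₁ ≤ γ₂ + γ₃ + 1) (h2 : γ₃ ≤ γ₁) (hν : 0 < ν) :
    ∃ B₂ : ℝ, 0 < B₂ ∧
      ∀ (ρ β μ Γ d η : ℝ), 0 < ρ → 0 < β → 1 < μ → 0 ≤ Γ → 0 < η →
      ∀ ε : ℂ, ε ≠ 0 →
      ∀ f : ℂ → ℝ → ℂ,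
        (∀ x : ℝ, ContinuousOn (fun τ => f τ x)
          (closure (Metric.ball (0 : ℂ) ρ) ∪ {τ : ℂ | τ ≠ 0 ∧ |Complex.arg τ - d| < η})) →
      ∀ Cf : ℝ,
        (∀ τ : ℂ, (τ ∈ closure (Metric.ball (0 : ℂ) ρ) ∨
            (τ ≠ 0 ∧ |Complex.arg τ - d| < η)) →
          ∀ x : ℝ,
            (1 + |x|) ^ μ * Real.exp (β * |x|) * (1 + ‖τ / ε ^ (Γ : ℂ)‖ ^ 2) *
              Real.exp (-ν * ‖τ / ε ^ (Γ : ℂ)‖) * ‖f τ x‖ ≤ Cf) →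
      ∀ τ : ℂ, (τ ∈ closure (Metric.ball (0 : ℂ) ρ) ∨
          (τ ≠ 0 ∧ |Complex.arg τ - d| < η)) →
      ∀ x : ℝ,
        (1 + |x|) ^ μ * Real.exp (β * |x|) * (1 + ‖τ / ε ^ (Γ : ℂ)‖ ^ 2) *
            Real.exp (-ν * ‖τ / ε ^ (Γ : ℂ)‖) *
            ‖τ ^ (-(γ₁ : ℂ)) * (τ * ∫ u in Set.Ioo (0 : ℝ) 1,
              (τ - (u : ℂ) * τ) ^ (γ₂ : ℂ) * ((u : ℂ) * τ) ^ (γ₃ : ℂ) * f ((u : ℂ) * τ) x)‖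
          ≤ B₂ * Cf * ‖ε‖ ^ (Γ * (γ₂ + γ₃ + 1) - Γ * γ₁) :=
  stmt_15_general γ₁ γ₂ γ₃ ν hγ₂ hγ₃ h1 h2 hν
end

section
/- For any real ν > 0 and real exponents γ₂, γ₃ ≥ 0, γ₁ ≥ γ₃ with γ₁ ≤ γ₂+γ₃+1, the quantity sup_{x ≥ 0} (1+x²) e^{−νx} x^{−γ₁} ∫₀^x (e^{νh}/(1+h²)) (x−h)^{γ₂} h^{γ₃} dh is finite. -/
/-!
Write `x = h + (x - h)`. Peetre's inequality `1 + x² ≤ 2 (1 + h²) (1 + (x - h)²)` and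
`e^{-νx} e^{νh} = e^{-ν(x-h)}` dominate the integrand, after multiplication by the prefactor, by
`2 g(x - h) x^{-γ₁} h^{γ₃}` with `g t = (1 + t²) t^{γ₂} e^{-νt}`.
For `x ≥ 1` we have `x^{-γ₁} h^{γ₃} ≤ x^{γ₃-γ₁} ≤ 1`, so the quantity is at most `2 ∫₀^∞ g`,
a sum of two Gamma integrals. For `x ≤ 1` we have `g(x - h) ≤ 2 x^{γ₂}`, so the quantity is at
most `4 x^{γ₂+γ₃+1-γ₁} ≤ 4`.
-/

open MeasureTheory Real Set

lemma one_add_sq_le_two_mul_one_add_sq_mul (x h : ℝ) :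
    1 + x ^ 2 ≤ 2 * (1 + h ^ 2) * (1 + (x - h) ^ 2) := by
  nlinarith [sq_nonneg (h - (x - h)), sq_nonneg (h * (x - h))]

lemma integrableOn_one_add_sq_mul_rpow_mul_exp_neg_mul {ν γ : ℝ} (hν : 0 < ν) (hγ : -1 < γ) :
    IntegrableOn (fun t : ℝ => (1 + t ^ 2) * t ^ γ * exp (-ν * t)) (Ioi 0) := by
  have h₀ := integrableOn_rpow_mul_exp_neg_mul_rpow hγ one_pos hν
  have h₂ := integrableOn_rpow_mul_exp_neg_mul_rpow (s := γ + 2) (by linarith) one_pos hν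
  refine (h₀.add h₂).congr_fun (fun t ht => ?_) measurableSet_Ioi
  simp only [Pi.add_apply, rpow_one, rpow_add (mem_Ioi.1 ht), rpow_two]
  ring

lemma setIntegral_Ioo_comp_sub_left (f : ℝ → ℝ) {x : ℝ} (hx : 0 ≤ x) :
    ∫ h in Ioo 0 x, f (x - h) = ∫ t in Ioo 0 x, f t := by
  simp only [← integral_Ioc_eq_integral_Ioo, ← intervalIntegral.integral_of_le hx,
    intervalIntegral.integral_comp_sub_left, sub_self, sub_zero]

lemma mul_setIntegral_le_setIntegral {α : Type*} [MeasurableSpace α] {μ : Measure α} {s : Set α}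
    (hs : MeasurableSet s) {c : ℝ} {f B : α → ℝ} (hc : 0 ≤ c) (hf : ∀ y ∈ s, 0 ≤ f y)
    (hB : IntegrableOn B s μ) (hfB : ∀ y ∈ s, c * f y ≤ B y) :
    c * ∫ y in s, f y ∂μ ≤ ∫ y in s, B y ∂μ := by
  rw [← integral_const_mul]
  exact integral_mono_of_nonneg
    (ae_restrict_of_forall_mem hs fun y hy => mul_nonneg hc (hf y hy)) hB
    (ae_restrict_of_forall_mem hs hfB)

lemma rpow_neg_mul_rpow_le_rpow_sub {x h γ₁ γ₃ : ℝ} (hh : 0 ≤ h) (hhx : h ≤ x) (hx : 0 < x)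
    (hγ₃ : 0 ≤ γ₃) : x ^ (-γ₁) * h ^ γ₃ ≤ x ^ (γ₃ - γ₁) :=
  calc x ^ (-γ₁) * h ^ γ₃ ≤ x ^ (-γ₁) * x ^ γ₃ := by gcongr
    _ = x ^ (γ₃ - γ₁) := by rw [← rpow_add hx, neg_add_eq_sub]

lemma one_add_sq_mul_rpow_mul_exp_neg_le {ν γ t x : ℝ} (hν : 0 ≤ ν) (hγ : 0 ≤ γ) (ht : 0 ≤ t)
    (htx : t ≤ x) (hx : x ≤ 1) : (1 + t ^ 2) * t ^ γ * exp (-ν * t) ≤ 2 * x ^ γ := by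
  have := rpow_nonneg (ht.trans htx) γ
  calc (1 + t ^ 2) * t ^ γ * exp (-ν * t) ≤ 2 * x ^ γ * 1 :=
        mul_le_mul (mul_le_mul (by nlinarith) (rpow_le_rpow ht htx hγ) (rpow_nonneg ht γ)
          zero_le_two) (exp_le_one_iff.2 (by nlinarith)) (exp_pos _).le (by positivity)
    _ = 2 * x ^ γ := mul_one _

section Kernel

variable (ν γ₁ γ₂ γ₃ : ℝ)

lemma kernel_integrand_nonneg {x h : ℝ} (hh : 0 ≤ h) (hhx : h ≤ x) :
    0 ≤ exp (ν * h) / (1 + h ^ 2) * (x - h) ^ γ₂ * h ^ γ₃ := by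
  have := rpow_nonneg (sub_nonneg.2 hhx) γ₂
  have := rpow_nonneg hh γ₃
  positivity

lemma kernel_le {x h : ℝ} (hh : 0 ≤ h) (hhx : h ≤ x) :
    (1 + x ^ 2) * exp (-ν * x) * x ^ (-γ₁) *
        (exp (ν * h) / (1 + h ^ 2) * (x - h) ^ γ₂ * h ^ γ₃)
      ≤ 2 * ((1 + (x - h) ^ 2) * (x - h) ^ γ₂ * exp (-ν * (x - h))) * (x ^ (-γ₁) * h ^ γ₃) := by
  have hexp : exp (-ν * x) * exp (ν * h) = exp (-ν * (x - h)) := by rw [← exp_add]; ring_nf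
  have hpeetre : (1 + x ^ 2) / (1 + h ^ 2) ≤ 2 * (1 + (x - h) ^ 2) := by
    rw [div_le_iff₀ (by positivity)]
    nlinarith [one_add_sq_le_two_mul_one_add_sq_mul x h]
  have hrest : 0 ≤ (x - h) ^ γ₂ * exp (-ν * (x - h)) * (x ^ (-γ₁) * h ^ γ₃) := by
    have := rpow_nonneg (sub_nonneg.2 hhx) γ₂
    have := rpow_nonneg (hh.trans hhx) (-γ₁)
    have := rpow_nonneg hh γ₃
    positivity
  calc _ = (1 + x ^ 2) / (1 + h ^ 2) *
        ((x - h) ^ γ₂ * exp (-ν * (x - h)) * (x ^ (-γ₁) * h ^ γ₃)) := by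
        rw [← hexp]; field_simp
    _ ≤ 2 * (1 + (x - h) ^ 2) * ((x - h) ^ γ₂ * exp (-ν * (x - h)) * (x ^ (-γ₁) * h ^ γ₃)) :=
        mul_le_mul_of_nonneg_right hpeetre hrest
    _ = _ := by ring

lemma kernel_bound_of_le_one (hν : 0 ≤ ν) (hγ₂ : 0 ≤ γ₂) (hγ₃ : 0 ≤ γ₃)
    (h1 : γ₁ ≤ γ₂ + γ₃ + 1) {x : ℝ} (hx : 0 < x) (hx1 : x ≤ 1) :
    (1 + x ^ 2) * exp (-ν * x) * x ^ (-γ₁) *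
        ∫ h in Ioo 0 x, exp (ν * h) / (1 + h ^ 2) * (x - h) ^ γ₂ * h ^ γ₃ ≤ 4 := by
  have hpointwise : ∀ h ∈ Ioo 0 x, (1 + x ^ 2) * exp (-ν * x) * x ^ (-γ₁) *
      (exp (ν * h) / (1 + h ^ 2) * (x - h) ^ γ₂ * h ^ γ₃) ≤ 4 * x ^ (γ₂ + γ₃ - γ₁) := by
    rintro h ⟨hh, hhx⟩
    refine (kernel_le ν γ₁ γ₂ γ₃ hh.le hhx.le).trans ?_
    have hg := one_add_sq_mul_rpow_mul_exp_neg_le hν hγ₂ (sub_nonneg.2 hhx.le)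
      (sub_le_self x hh.le) hx1
    have hpow := rpow_neg_mul_rpow_le_rpow_sub (γ₁ := γ₁) hh.le hhx.le hx hγ₃
    have := rpow_nonneg (sub_nonneg.2 hhx.le) γ₂
    have := rpow_nonneg hx.le (-γ₁)
    have := rpow_nonneg hh.le γ₃
    calc _ ≤ 2 * (2 * x ^ γ₂) * x ^ (γ₃ - γ₁) :=
          mul_le_mul (mul_le_mul_of_nonneg_left hg zero_le_two) hpow (by positivity)
            (by positivity)
      _ = 4 * x ^ (γ₂ + γ₃ - γ₁) := by
          rw [mul_assoc, mul_assoc, ← rpow_add hx]; ring_nf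
  calc _ ≤ ∫ _ in Ioo 0 x, 4 * x ^ (γ₂ + γ₃ - γ₁) :=
        mul_setIntegral_le_setIntegral measurableSet_Ioo (by positivity)
          (fun h hh => kernel_integrand_nonneg ν γ₂ γ₃ hh.1.le hh.2.le)
          (integrableOn_const measure_Ioo_lt_top.ne) hpointwise
    _ = 4 * x ^ (γ₂ + γ₃ + 1 - γ₁) := by
        rw [setIntegral_const, volume_real_Ioo_of_le hx.le, smul_eq_mul, sub_zero,
          show γ₂ + γ₃ + 1 - γ₁ = 1 + (γ₂ + γ₃ - γ₁) by ring, rpow_add hx, rpow_one]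
        ring
    _ ≤ 4 := by
        have := rpow_le_one hx.le hx1 (by linarith : 0 ≤ γ₂ + γ₃ + 1 - γ₁)
        linarith

lemma kernel_bound_of_one_le (hν : 0 < ν) (hγ₂ : 0 ≤ γ₂) (hγ₃ : 0 ≤ γ₃) (h2 : γ₃ ≤ γ₁)
    {x : ℝ} (hx1 : 1 ≤ x) :
    (1 + x ^ 2) * exp (-ν * x) * x ^ (-γ₁) *
        ∫ h in Ioo 0 x, exp (ν * h) / (1 + h ^ 2) * (x - h) ^ γ₂ * h ^ γ₃
      ≤ 2 * ∫ t in Ioi 0, (1 + t ^ 2) * t ^ γ₂ * exp (-ν * t) := by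
  set g : ℝ → ℝ := fun t => (1 + t ^ 2) * t ^ γ₂ * exp (-ν * t)
  have hg : Continuous g := by
    have := continuous_rpow_const hγ₂
    fun_prop
  have hgi : IntegrableOn g (Ioi 0) :=
    integrableOn_one_add_sq_mul_rpow_mul_exp_neg_mul hν (by linarith)
  have hpointwise : ∀ h ∈ Ioo 0 x, (1 + x ^ 2) * exp (-ν * x) * x ^ (-γ₁) *
      (exp (ν * h) / (1 + h ^ 2) * (x - h) ^ γ₂ * h ^ γ₃) ≤ 2 * g (x - h) := by
    rintro h ⟨hh, hhx⟩
    have hg0 : 0 ≤ g (x - h) := by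
      have := rpow_nonneg (sub_nonneg.2 hhx.le) γ₂
      positivity
    calc _ ≤ 2 * g (x - h) * (x ^ (-γ₁) * h ^ γ₃) := kernel_le ν γ₁ γ₂ γ₃ hh.le hhx.le
      _ ≤ 2 * g (x - h) * 1 := by
          gcongr
          exact (rpow_neg_mul_rpow_le_rpow_sub hh.le hhx.le (by linarith) hγ₃).trans
            (rpow_le_one_of_one_le_of_nonpos hx1 (by linarith))
      _ = 2 * g (x - h) := mul_one _
  calc _ ≤ ∫ h in Ioo 0 x, 2 * g (x - h) :=
        mul_setIntegral_le_setIntegral measurableSet_Ioo (by positivity)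
          (fun h hh => kernel_integrand_nonneg ν γ₂ γ₃ hh.1.le hh.2.le)
          ((by fun_prop : Continuous fun h => 2 * g (x - h)).integrableOn_Icc.mono_set
            Ioo_subset_Icc_self) hpointwise
    _ = 2 * ∫ t in Ioo 0 x, g t := by
        rw [integral_const_mul, setIntegral_Ioo_comp_sub_left g (by linarith)]
    _ ≤ 2 * ∫ t in Ioi 0, g t := by
        gcongr 2 * ?_
        refine setIntegral_mono_set hgi (ae_restrict_of_forall_mem measurableSet_Ioi fun t ht => ?_)
          Ioo_subset_Ioi_self.eventuallyLE
        have := rpow_nonneg (mem_Ioi.1 ht).le γ₂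
        positivity

end Kernel

/-- The scalar kernel estimate: for `ν > 0` and exponents `γ₂, γ₃ ≥ 0`,
`γ₃ ≤ γ₁ ≤ γ₂ + γ₃ + 1`, the quantity
`(1+x²) e^{-νx} x^{-γ₁} ∫₀^x e^{νh}/(1+h²) (x-h)^{γ₂} h^{γ₃} dh`
is bounded uniformly in `x ≥ 0`. -/
theorem stmt_16 (ν γ₁ γ₂ γ₃ : ℝ) (hν : 0 < ν) (hγ₂ : 0 ≤ γ₂) (hγ₃ : 0 ≤ γ₃)
    (h2 : γ₃ ≤ γ₁) (h1 : γ₁ ≤ γ₂ + γ₃ + 1) :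
    ∃ M : ℝ, ∀ x : ℝ, 0 ≤ x →
      (1 + x ^ 2) * Real.exp (-ν * x) * x ^ (-γ₁) *
          ∫ h in Set.Ioo (0 : ℝ) x,
            Real.exp (ν * h) / (1 + h ^ 2) * (x - h) ^ γ₂ * h ^ γ₃
        ≤ M := by
  refine ⟨max 4 (2 * ∫ t in Ioi 0, (1 + t ^ 2) * t ^ γ₂ * exp (-ν * t)), fun x hx => ?_⟩
  rcases hx.eq_or_lt with rfl | hx0
  · simp
  rcases le_total x 1 with hx1 | hx1
  · exact (kernel_bound_of_le_one ν γ₁ γ₂ γ₃ hν.le hγ₂ hγ₃ h1 hx0 hx1).trans (le_max_left _ _)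
  · exact (kernel_bound_of_one_le ν γ₁ γ₂ γ₃ hν hγ₂ hγ₃ h2 hx1).trans (le_max_right _ _)
end
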